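/- arXiv:1412.8240 — 16 statements merged into one kernel-verified Lean document; each statement's English description precedes it below -/
import Mathlib

section
/- Let A be a (not necessarily unital) C*-algebra, α : A → A a *-homomorphism, H a complex Hilbert space, π : A → B(H) a nondegenerate *-representation (i.e. the closed linear span of {π(a)ξ : a ∈ A, ξ ∈ H} equals H), and U ∈ B(H) a bounded operator satisfying U π(a) U* = π(α(a)) for all a ∈ A. Then: (1) UU* is a projection (equivalently, U is a partial isometry, U = U U* U); (2) the initial projection U*U commutes with π(a) for every a ∈ A; (3) the set I_{(π,U)} := {a ∈ A : U*U π(a) = π(a)} is a closed two-sided ideal of A. -/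
/-!
Nondegeneracy of `π` makes `π e → 1` strongly along an approximate unit `e`, so
`π (α e) = U π(e) U* → U U*` strongly. Since `π ∘ α` is multiplicative, this strong limit `P`
fixes the range of every `π (α a)`, hence `P² = P`, and the C⋆-identity applied to
`U - U U* U` turns `P² = P` into `U U* U = U`.

Conjugating the covariance relation by `U` shows that the compression `x ↦ Q x Q` by
`Q = U* U` is multiplicative on `π(A)`. For `y = π(b) Q - Q π(b) Q` this gives `y* y = 0`, so
`π(b) Q = Q π(b) Q` for every `b`; taking adjoints, `Q` commutes with `π(A)`, and the ideal
properties of `{a | Q π(a) = π(a)}` follow.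
-/

open Filter Topology

theorem isClosed_setOf_tendsto_apply_self {𝕜 E ι : Type*} [NontriviallyNormedField 𝕜]
    [NormedAddCommGroup E] [NormedSpace 𝕜 E] {l : Filter ι} {T : ι → E →L[𝕜] E}
    (hT : ∀ᶠ i in l, ‖T i‖ ≤ 1) :
    IsClosed {x | Tendsto (fun i => T i x) l (𝓝 x)} := by
  refine isClosed_of_closure_subset fun x hx => Metric.tendsto_nhds.mpr fun ε hε => ?_
  obtain ⟨y, hy, hxy⟩ := Metric.mem_closure_iff.mp hx (ε / 3) (by positivity)
  filter_upwards [hT, Metric.tendsto_nhds.mp hy (ε / 3) (by positivity)] with i hTi hiy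
  have hTxy : dist (T i x) (T i y) ≤ dist x y := by
    simpa only [dist_eq_norm, ← map_sub] using
      ((T i).le_opNorm (x - y)).trans (mul_le_of_le_one_left (norm_nonneg _) hTi)
  calc dist (T i x) x ≤ dist (T i x) (T i y) + dist (T i y) y + dist y x := dist_triangle4 ..
    _ < ε / 3 + ε / 3 + ε / 3 := by rw [dist_comm y x]; gcongr; exact hTxy.trans_lt hxy
    _ = ε := by ring

namespace Filter.IsApproximateUnit

open scoped CStarAlgebra

variable {A H : Type*} [NonUnitalCStarAlgebra A]
  [NormedAddCommGroup H] [InnerProductSpace ℂ H] [CompleteSpace H]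
  {l : Filter A} (hl : l.IsApproximateUnit) (π : A →⋆ₙₐ[ℂ] (H →L[ℂ] H))
include hl

theorem tendsto_apply_apply (b : A) (w : H) : Tendsto (fun e => π e (π b w)) l (𝓝 (π b w)) := by
  have hcont : Continuous fun a : A => π a w := (map_continuous π).clm_apply continuous_const
  simpa only [Function.comp_def, map_mul, mul_apply_eq_comp] using
    (hcont.tendsto b).comp (hl.tendsto_mul_right b)

theorem tendsto_apply_of_mem_span {v : H}
    (hv : v ∈ Submodule.span ℂ {v : H | ∃ (a : A) (w : H), π a w = v}) :
    Tendsto (fun e => π e v) l (𝓝 v) := by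
  induction hv using Submodule.span_induction with
  | mem v hv =>
    obtain ⟨b, w, rfl⟩ := hv
    exact hl.tendsto_apply_apply π b w
  | zero => simpa only [map_zero] using tendsto_const_nhds
  | add x y _ _ hx hy => simpa only [map_add] using hx.add hy
  | smul c x _ hx => simpa only [map_smul] using hx.const_smul c

theorem tendsto_apply_of_dense_span (hnorm : ∀ᶠ e in l, ‖e‖ ≤ 1)
    (hπ : Dense (↑(Submodule.span ℂ {v : H | ∃ (a : A) (w : H), π a w = v}) : Set H)) (η : H) :
    Tendsto (fun e => π e η) l (𝓝 η) := by
  have hclosed := isClosed_setOf_tendsto_apply_self (T := fun e => π e)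
    (hnorm.mono fun e he => (NonUnitalStarAlgHom.norm_apply_le π e).trans he)
  exact closure_minimal (fun v hv => hl.tendsto_apply_of_mem_span π hv) hclosed (hπ η)

theorem mul_eq_of_tendsto_apply {P : H →L[ℂ] H} (hP : ∀ ξ, Tendsto (fun e => π e ξ) l (𝓝 (P ξ)))
    (a : A) : P * π a = π a := by
  have := hl.neBot
  ext ξ
  exact tendsto_nhds_unique (hP (π a ξ)) (hl.tendsto_apply_apply π a ξ)

theorem isIdempotentElem_of_tendsto_apply {P : H →L[ℂ] H}
    (hP : ∀ ξ, Tendsto (fun e => π e ξ) l (𝓝 (P ξ))) : IsIdempotentElem P := by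
  have := hl.neBot
  ext ξ
  refine tendsto_nhds_unique ?_ (hP ξ)
  have := (P.continuous.tendsto _).comp (hP ξ)
  simpa only [Function.comp_def, ← mul_apply_eq_comp, hl.mul_eq_of_tendsto_apply π hP]
    using this

end Filter.IsApproximateUnit

theorem CStarRing.mul_star_mul_eq_self_of_isIdempotentElem {R : Type*} [NonUnitalNormedRing R]
    [StarRing R] [CStarRing R] {u : R} (hu : IsIdempotentElem (u * star u)) :
    u * star u * u = u := by
  have key : (u - u * star u * u) * star (u - u * star u * u) = u * star u
      - u * star u * (u * star u) - u * star u * (u * star u)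
      + u * star u * (u * star u) * (u * star u) := by
    simp only [star_sub, star_mul, star_star]
    noncomm_ring
  rw [hu.eq, hu.eq, sub_self, zero_sub, neg_add_cancel] at key
  exact (sub_eq_zero.mp ((mul_star_self_eq_zero_iff _).mp key)).symm

theorem IsStarProjection.mul_eq_mul_mul_of_compression_star_mul {R : Type*}
    [NonUnitalNormedRing R] [StarRing R] [CStarRing R] {q x : R} (hq : IsStarProjection q)
    (h : q * star x * q * x * q = q * (star x * x) * q) :
    x * q = q * x * q := by
  have hqq : q * q = q := hq.isIdempotentElem
  have key : star (x * q - q * x * q) * (x * q - q * x * q) =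
      q * (star x * x) * q - q * star x * q * x * q - q * star x * q * x * q
        + q * star x * (q * q) * x * q := by
    simp only [star_sub, star_mul, hq.isSelfAdjoint.star_eq]
    noncomm_ring
  rw [hqq, h, sub_sub_cancel_left, neg_add_cancel] at key
  exact sub_eq_zero.mp ((CStarRing.star_mul_self_eq_zero_iff _).mp key)

theorem IsSelfAdjoint.commute_of_mul_eq_mul_mul {R : Type*} [Semigroup R] [StarMul R] {q x : R}
    (hq : IsSelfAdjoint q) (hx : x * q = q * x * q) (hx' : star x * q = q * star x * q) :
    Commute q x := by
  calc q * x = star (star x * q) := by rw [star_mul, star_star, hq.star_eq]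
    _ = star (q * star x * q) := by rw [hx']
    _ = x * q := by rw [star_mul, star_mul, star_star, hq.star_eq, ← mul_assoc, ← hx]

open scoped CStarAlgebra

/-- For a representation `(π, U)` of a C*-dynamical system `(A, α)` on a
Hilbert space `H` (with `π` nondegenerate and `U π(a) U* = π(α a)`):
(1) `U U*` is a projection (equivalently `U` is a partial isometry, `U = U U* U`);
(2) the initial projection `U* U` commutes with every `π a`;
(3) `I_{(π,U)} = {a | U* U π(a) = π(a)}` is a closed two-sided ideal of `A`. -/
theorem stmt0 {A : Type*} [NonUnitalNormedRing A] [StarRing A] [CStarRing A]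
    [NormedSpace ℂ A] [IsScalarTower ℂ A A] [SMulCommClass ℂ A A] [StarModule ℂ A]
    [CompleteSpace A]
    {H : Type*} [NormedAddCommGroup H] [InnerProductSpace ℂ H] [CompleteSpace H]
    (α : A →⋆ₙₐ[ℂ] A) (π : A →⋆ₙₐ[ℂ] (H →L[ℂ] H)) (U : H →L[ℂ] H)
    (hπ : Dense (↑(Submodule.span ℂ {v : H | ∃ (a : A) (w : H), π a w = v}) : Set H))
    (hcov : ∀ a : A, U * π a * star U = π (α a)) :
    -- (1) `U U*` is a projection, i.e. `U` is a partial isometry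
    ((U * star U) * (U * star U) = U * star U ∧ star (U * star U) = U * star U ∧
      U * star U * U = U) ∧
    -- (2) `U* U` commutes with the range of `π`
    (∀ a : A, star U * U * π a = π a * (star U * U)) ∧
    -- (3) `{a | U* U π a = π a}` is a closed two-sided ideal of `A`
    (IsClosed {a : A | star U * U * π a = π a} ∧
      (0 : A) ∈ {a : A | star U * U * π a = π a} ∧
      (∀ a ∈ {a : A | star U * U * π a = π a}, ∀ b ∈ {a : A | star U * U * π a = π a},
        a + b ∈ {a : A | star U * U * π a = π a}) ∧
      (∀ a ∈ {a : A | star U * U * π a = π a}, -a ∈ {a : A | star U * U * π a = π a}) ∧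
      (∀ a ∈ {a : A | star U * U * π a = π a}, ∀ x : A,
        x * a ∈ {a : A | star U * U * π a = π a} ∧
          a * x ∈ {a : A | star U * U * π a = π a})) := by
  let _ : NonUnitalCStarAlgebra A := {}
  let _ := CStarAlgebra.spectralOrder A
  have := CStarAlgebra.spectralOrderedRing A
  have hinc := CStarAlgebra.increasingApproximateUnit A
  have hl := hinc.toIsApproximateUnit
  have hπl := hl.tendsto_apply_of_dense_span π hinc.eventually_norm hπ
  have hρ (ξ : H) : Tendsto (fun e => (π.comp α) e ξ) (CStarAlgebra.approximateUnit A)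
      (𝓝 ((U * star U) ξ)) := by
    simpa only [Function.comp_def, NonUnitalStarAlgHom.comp_apply, ← hcov, mul_apply_eq_comp]
      using (U.continuous.tendsto _).comp (hπl (star U ξ))
  have hP : IsIdempotentElem (U * star U) := hl.isIdempotentElem_of_tendsto_apply _ hρ
  have hPU : U * star U * U = U := CStarRing.mul_star_mul_eq_self_of_isIdempotentElem hP
  have hQ : IsStarProjection (star U * U) :=
    ⟨by rw [IsIdempotentElem, mul_assoc, ← mul_assoc U, hPU], .star_mul_self U⟩
  have hcompression (a b : A) : star U * U * π a * (star U * U) * π b * (star U * U) =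
      star U * U * π (a * b) * (star U * U) := by
    have h := congrArg (star U * · * U)
      (show U * π a * star U * (U * π b * star U) = U * π (a * b) * star U by
        rw [hcov, hcov, hcov, map_mul, map_mul])
    simpa only [mul_assoc] using h
  have hmul (b : A) : π b * (star U * U) = star U * U * π b * (star U * U) :=
    hQ.mul_eq_mul_mul_of_compression_star_mul
      (by simpa only [map_mul, map_star] using hcompression (star b) b)
  have hcomm (a : A) : Commute (star U * U) (π a) :=
    hQ.isSelfAdjoint.commute_of_mul_eq_mul_mul (hmul a)
      (by simpa only [map_star] using hmul (star a))
  refine ⟨⟨hP, (IsSelfAdjoint.mul_star_self U).star_eq, hPU⟩, fun a => hcomm a,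
    isClosed_eq (continuous_const.mul (map_continuous π)) (map_continuous π), by simp,
    fun a (ha : _ = _) b (hb : _ = _) => show _ = _ by rw [map_add, mul_add, ha, hb],
    fun a (ha : _ = _) => show _ = _ by rw [map_neg, mul_neg, ha],
    fun a (ha : _ = _) x => ⟨show _ = _ by rw [map_mul, ← mul_assoc, (hcomm x).eq, mul_assoc, ha],
      show _ = _ by rw [map_mul, ← mul_assoc, ha]⟩⟩
end

section
/- Let (A, α) be a C*-dynamical system and let (π, U) be an injective representation of (A, α) on a Hilbert space H (i.e. π is injective). Then I_{(π,U)} ⊆ (ker α)^⊥; explicitly, if a ∈ A satisfies U*U π(a) = π(a), then a·b = 0 for every b ∈ A with α(b) = 0. In particular, I_{(π,U)} = (ker α)^⊥ if and only if (ker α)^⊥ ⊆ I_{(π,U)}. -/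
/-- If `(π, U)` is an injective representation of a C*-dynamical system
`(A, α)`, then `I_{(π,U)} ⊆ (ker α)^⊥`: any `a` with `U* U π(a) = π(a)` satisfies `a b = 0`
whenever `α b = 0`. In particular `I_{(π,U)} = (ker α)^⊥` iff `(ker α)^⊥ ⊆ I_{(π,U)}`. -/
theorem stmt1 {A : Type*} [NonUnitalNormedRing A] [StarRing A] [CStarRing A]
    [NormedSpace ℂ A] [IsScalarTower ℂ A A] [SMulCommClass ℂ A A] [StarModule ℂ A]
    [CompleteSpace A]
    {H : Type*} [NormedAddCommGroup H] [InnerProductSpace ℂ H] [CompleteSpace H]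
    (α : A →⋆ₙₐ[ℂ] A) (π : A →⋆ₙₐ[ℂ] (H →L[ℂ] H)) (U : H →L[ℂ] H)
    (hπ : Dense (↑(Submodule.span ℂ {v : H | ∃ (a : A) (w : H), π a w = v}) : Set H))
    (hπinj : Function.Injective π)
    (hcov : ∀ a : A, U * π a * star U = π (α a)) :
    (∀ a : A, star U * U * π a = π a → ∀ b : A, α b = 0 → a * b = 0) ∧
    ({a : A | star U * U * π a = π a} = {a : A | ∀ b : A, α b = 0 → a * b = 0} ↔
      {a : A | ∀ b : A, α b = 0 → a * b = 0} ⊆ {a : A | star U * U * π a = π a}) := by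
  have key : ∀ a : A, star U * U * π a = π a → ∀ b : A, α b = 0 → a * b = 0 := by
    intro a ha b hb
    set c := a * b with hc
    have hαc : α c = 0 := by
      rw [hc, map_mul, hb, mul_zero]
    -- U π(c) π(c)* U* = π(α(c c*)) = 0
    have h1 : U * π c * star (U * π c) = 0 := by
      have h2 := hcov (c * star c)
      rw [map_mul α, hαc, zero_mul, map_zero, map_mul π, map_star] at h2
      calc U * π c * star (U * π c) = U * π c * (star (π c) * star U) := by
            rw [star_mul]
          _ = U * (π c * star (π c)) * star U := by
            simp only [mul_assoc]
          _ = 0 := h2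
    have h3 : U * π c = 0 := by
      rwa [CStarRing.mul_star_self_eq_zero_iff] at h1
    have h4 : π c = 0 := by
      have h5 : star U * (U * π c) = π c := by
        rw [hc, map_mul, show star U * (U * (π a * π b)) = star U * U * π a * π b by simp only [mul_assoc],
          ha]
      rw [← h5, h3, mul_zero]
    have := hπinj (h4.trans (map_zero π).symm)
    exact this
  refine ⟨key, ?_⟩
  constructor
  · intro h; rw [h]
  · intro h
    apply Set.Subset.antisymm
    · intro a ha; exact key a ha
    · exact h
end

section
/- Let (A, α) be a C*-dynamical system and let (π, U) be a representation of (A, α) on a Hilbert space H. Then the pair (ker π, I_{(π,U)}) satisfies: α(ker π) ⊆ ker π, ker π ⊆ I_{(π,U)}, and I_{(π,U)} ∩ α⁻¹(ker π) = ker π. Consequently, for every closed two-sided ideal J of A with J ⊆ I_{(π,U)}, the pair (ker π, I_{(π,U)}) is a J-pair for (A, α). -/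
/-- For a representation `(π, U)` of a C*-dynamical system `(A, α)`:
`α(ker π) ⊆ ker π`, `ker π ⊆ I_{(π,U)}`, and `I_{(π,U)} ∩ α⁻¹(ker π) = ker π`.
Consequently, for every closed two-sided ideal `J ⊆ I_{(π,U)}`, the pair
`(ker π, I_{(π,U)})` is a `J`-pair for `(A, α)`. -/
theorem stmt2 {A : Type*} [NonUnitalNormedRing A] [StarRing A] [CStarRing A]
    [NormedSpace ℂ A] [IsScalarTower ℂ A A] [SMulCommClass ℂ A A] [StarModule ℂ A]
    [CompleteSpace A]
    {H : Type*} [NormedAddCommGroup H] [InnerProductSpace ℂ H] [CompleteSpace H]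
    (α : A →⋆ₙₐ[ℂ] A) (π : A →⋆ₙₐ[ℂ] (H →L[ℂ] H)) (U : H →L[ℂ] H)
    (hπ : Dense (↑(Submodule.span ℂ {v : H | ∃ (a : A) (w : H), π a w = v}) : Set H))
    (hcov : ∀ a : A, U * π a * star U = π (α a)) :
    -- `α (ker π) ⊆ ker π`
    (⇑α '' {a : A | π a = 0} ⊆ {a : A | π a = 0}) ∧
    -- `ker π ⊆ I_{(π,U)}`
    ({a : A | π a = 0} ⊆ {a : A | star U * U * π a = π a}) ∧
    -- `I_{(π,U)} ∩ α⁻¹ (ker π) = ker π`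
    ({a : A | star U * U * π a = π a} ∩ ⇑α ⁻¹' {a : A | π a = 0} = {a : A | π a = 0}) ∧
    -- consequently, for every closed two-sided ideal `J ⊆ I_{(π,U)}`,
    -- `(ker π, I_{(π,U)})` is a `J`-pair for `(A, α)`
    (∀ J : Set A, IsClosed J → (0 : A) ∈ J → (∀ a ∈ J, ∀ b ∈ J, a + b ∈ J) →
      (∀ a ∈ J, -a ∈ J) → (∀ a ∈ J, ∀ x : A, x * a ∈ J ∧ a * x ∈ J) →
      J ⊆ {a : A | star U * U * π a = π a} →
      (⇑α '' {a : A | π a = 0} ⊆ {a : A | π a = 0} ∧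
        J ⊆ {a : A | star U * U * π a = π a} ∧
        {a : A | star U * U * π a = π a} ∩ ⇑α ⁻¹' {a : A | π a = 0} =
          {a : A | π a = 0})) := by
  have h1 : ⇑α '' {a : A | π a = 0} ⊆ {a : A | π a = 0} := by
    rintro _ ⟨a, (ha : π a = 0), rfl⟩
    show π (α a) = 0
    rw [← hcov a, ha, mul_zero, zero_mul]
  have h2 : {a : A | π a = 0} ⊆ {a : A | star U * U * π a = π a} := by
    intro a (ha : π a = 0)
    show star U * U * π a = π a
    rw [ha, mul_zero]
  have h3 : {a : A | star U * U * π a = π a} ∩ ⇑α ⁻¹' {a : A | π a = 0}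
      = {a : A | π a = 0} := by
    apply Set.Subset.antisymm
    · rintro a ⟨(haI : star U * U * π a = π a), (hak : π (α a) = 0)⟩
      show π a = 0
      have key : (U * π a) * star (U * π a) = 0 := by
        have : (U * π a) * star (U * π a) = U * π (a * star a) * star U := by
          rw [map_mul, map_star]
          simp only [star_mul, mul_assoc]
        rw [this, hcov, map_mul, map_mul, hak, zero_mul]
      have hU : U * π a = 0 := by
        have := CStarRing.norm_self_mul_star (x := U * π a)
        rw [key, norm_zero] at this
        have h0 : ‖U * π a‖ = 0 := by
          nlinarith [norm_nonneg (U * π a)]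
        exact norm_eq_zero.mp h0
      calc π a = star U * U * π a := haI.symm
        _ = star U * (U * π a) := by rw [mul_assoc]
        _ = 0 := by rw [hU, mul_zero]
    · intro a ha
      exact ⟨h2 ha, h1 ⟨a, ha, rfl⟩⟩
  exact ⟨h1, h2, h3, fun J _ _ _ _ _ hJ => ⟨h1, hJ, h3⟩⟩
end

section
/- Let (A, α) be a reversible C*-dynamical system, i.e. ker α is a complemented ideal of A and the range α(A) is a hereditary C*-subalgebra of A. Then for every n ∈ ℕ the C*-dynamical system (A, αⁿ) is also reversible: ker(αⁿ) is a complemented ideal of A and αⁿ(A) is a hereditary C*-subalgebra of A. -/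
/-!
Reversibility passes to a composition `ψ ∘ φ` of reversible endomorphisms, so the theorem
follows by induction on `n`. Two C*-facts drive this. A *-homomorphism is injective, hence
isometric, on the annihilator of its kernel, so a complemented kernel forces a closed range.
And every `c` in a *-subalgebra `S` is a limit of elements `c z c` with `z ∈ S`: in the
unitization one finds `z ∈ S` with `z c = 1 - (1 - s c⋆c) ^ m`, and the functional calculus
bounds `s ‖c (1 - s c⋆c) ^ m‖ ^ 2` by `1 / (2m + 1)`. With these, the annihilator part of
`φ a` modulo `ker ψ` is a limit of elements `φ a z φ a` of the closed hereditary range of `φ`,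
and `u x u'` for `u, u'` in the range of `ψ ∘ φ` is a limit of `u (z u x u' z') u'` with
`z u x u' z' ∈ range ψ`.
-/

open scoped CStarAlgebra

lemma mul_one_sub_pow_le {x : ℝ} (hx₀ : 0 ≤ x) (hx₁ : x ≤ 1) (k : ℕ) :
    x * (1 - x) ^ k ≤ 1 / (k + 1) := by
  have hbernoulli : (1 - x) ^ k * (1 + k * x) ≤ 1 :=
    calc (1 - x) ^ k * (1 + k * x) ≤ (1 - x) ^ k * (1 + x) ^ k := by
          gcongr
          exact one_add_mul_le_pow (by linarith) k
      _ = (1 - x ^ 2) ^ k := by rw [← mul_pow]; ring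
      _ ≤ 1 := pow_le_one₀ (by nlinarith) (by nlinarith)
  rw [le_div_iff₀ (by positivity)]
  nlinarith [pow_nonneg (sub_nonneg.2 hx₁) k]

lemma mul_norm_mul_one_sub_smul_star_mul_self_pow_sq_le {B : Type*} [CStarAlgebra B] (x : B)
    {s : ℝ} (hs : 0 < s) (hsx : s * ‖x‖ ^ 2 ≤ 1) (m : ℕ) :
    s * ‖x * (1 - s • (star x * x)) ^ m‖ ^ 2 ≤ 1 / (2 * m + 1) := by
  nontriviality B using norm_of_subsingleton, add_nonneg, Nat.cast_nonneg
  set a := star x * x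
  have ha : IsSelfAdjoint a := .star_mul_self x
  set e := 1 - s • a
  have he : IsSelfAdjoint e := (IsSelfAdjoint.one B).sub (IsSelfAdjoint.smul (star_trivial s) ha)
  have hnorm : ‖x * e ^ m‖ ^ 2 = ‖e ^ m * a * e ^ m‖ := by
    rw [sq, ← CStarRing.norm_star_mul_self, star_mul, (he.pow m).star_eq]
    simp only [a, mul_assoc]
  have hcfc : e ^ m * a * e ^ m = cfc (fun t : ℝ => (1 - s * t) ^ m * t * (1 - s * t) ^ m) a := by
    have he' : cfc (fun t : ℝ => 1 - s * t) a = e := by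
      rw [cfc_sub (fun _ : ℝ => (1 : ℝ)) (fun t : ℝ => s * t) a, cfc_const_mul_id s a,
        cfc_const_one ℝ a]
    rw [cfc_mul (fun t : ℝ => (1 - s * t) ^ m * t) (fun t : ℝ => (1 - s * t) ^ m) a,
      cfc_mul (fun t : ℝ => (1 - s * t) ^ m) (fun t : ℝ => t) a,
      cfc_pow (fun t : ℝ => 1 - s * t) m a, cfc_id' ℝ a, he']
  have hspec : ∀ t ∈ spectrum ℝ a,
      ‖(1 - s * t) ^ m * t * (1 - s * t) ^ m‖ ≤ 1 / (s * (2 * m + 1)) := by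
    intro t ht
    have ht₀ : 0 ≤ t := spectrum_star_mul_self_nonneg t ht
    have ht₁ : t ≤ ‖x‖ ^ 2 := by
      simpa [abs_of_nonneg ht₀, a, CStarRing.norm_star_mul_self, sq] using
        spectrum.norm_le_norm_of_mem ht
    have hst : s * t ≤ 1 := hsx.trans' (by gcongr)
    have hst₀ : 0 ≤ 1 - s * t := sub_nonneg.2 hst
    have key := mul_one_sub_pow_le (mul_nonneg hs.le ht₀) hst (2 * m)
    rw [Real.norm_eq_abs, abs_of_nonneg (by positivity), le_div_iff₀ (by positivity)]
    calc (1 - s * t) ^ m * t * (1 - s * t) ^ m * (s * (2 * m + 1))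
        = s * t * (1 - s * t) ^ (2 * m) * (2 * m + 1) := by ring
      _ ≤ 1 := by rw [← le_div_iff₀ (by positivity)]; exact_mod_cast key
  calc s * ‖x * e ^ m‖ ^ 2 ≤ s * (1 / (s * (2 * m + 1))) := by
        rw [hnorm, hcfc]
        gcongr
        exact norm_cfc_le (by positivity) hspec
    _ = 1 / (2 * m + 1) := by field_simp

section CStarAlgebra

variable {A B : Type*} [NonUnitalCStarAlgebra A] [NonUnitalCStarAlgebra B]

open Unitization

lemma exists_mem_inr_mul_eq_one_sub_pow (S : NonUnitalStarSubalgebra ℂ A) {c : A} (hc : c ∈ S)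
    (s : ℝ) (m : ℕ) :
    ∃ z ∈ S, ((z * c : A) : A⁺¹) = 1 - (1 - s • (star (c : A⁺¹) * c)) ^ m := by
  induction m with
  | zero => exact ⟨0, zero_mem S, by simp⟩
  | succ m ih =>
    obtain ⟨z, hzS, hz⟩ := ih
    have hsmul : ∀ y ∈ S, s • y ∈ S := fun y hy => by
      simpa [Complex.coe_smul] using SMulMemClass.smul_mem (s : ℂ) hy
    refine ⟨z + s • star c - s • (star c * c * z), sub_mem (add_mem hzS (hsmul _ (star_mem hc)))
      (hsmul _ (mul_mem (mul_mem (star_mem hc) hc) hzS)), ?_⟩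
    have hzc : ((z + s • star c - s • (star c * c * z)) * c : A)
        = z * c + s • (star c * c) - s • (star c * c) * (z * c) := by
      simp only [sub_mul, add_mul, smul_mul_assoc, mul_assoc]
    rw [hzc, inr_sub ℂ, inr_add ℂ, inr_mul ℂ _ (z * c), hz, inr_smul, inr_mul ℂ, inr_star,
      pow_succ']
    generalize s • (star (c : A⁺¹) * c) = y
    noncomm_ring

lemma mem_closure_image_mul_mul (S : NonUnitalStarSubalgebra ℂ A) {c : A} (hc : c ∈ S) :
    c ∈ closure ((fun z => c * z * c) '' S) := by
  rw [Metric.mem_closure_iff]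
  intro ε hε
  set s : ℝ := (‖c‖ ^ 2 + 1)⁻¹
  have hs : 0 < s := by positivity
  have hsc : s * ‖(c : A⁺¹)‖ ^ 2 ≤ 1 := by
    rw [norm_inr, inv_mul_le_one₀ (by positivity)]
    linarith
  obtain ⟨m, hm⟩ := exists_nat_gt (s * ε ^ 2)⁻¹
  obtain ⟨z, hzS, hz⟩ := exists_mem_inr_mul_eq_one_sub_pow S hc s m
  refine ⟨c * z * c, ⟨z, hzS, rfl⟩, ?_⟩
  have hdist :
      dist c (c * z * c) = ‖(c : A⁺¹) * (1 - s • (star (c : A⁺¹) * c)) ^ m‖ := by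
    rw [dist_eq_norm, ← norm_inr (𝕜 := ℂ), inr_sub ℂ, mul_assoc, inr_mul ℂ c, hz]
    noncomm_ring
  have hlt : 1 / (2 * (m : ℝ) + 1) < s * ε ^ 2 := by
    rw [div_lt_iff₀ (by positivity)]
    rw [inv_lt_iff_one_lt_mul₀ (by positivity)] at hm
    nlinarith [hs, hε]
  rw [hdist]
  refine lt_of_pow_lt_pow_left₀ 2 hε.le (lt_of_mul_lt_mul_left ?_ hs.le)
  exact (mul_norm_mul_one_sub_smul_star_mul_self_pow_sq_le _ hs hsc m).trans_lt hlt

namespace NonUnitalStarAlgHom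

theorem coe_pow (f : A →⋆ₙₐ[ℂ] A) (n : ℕ) : ⇑(f ^ n) = (⇑f)^[n] :=
  hom_coe_pow _ rfl (fun _ _ => rfl) _ _

def KerComplemented (φ : A →⋆ₙₐ[ℂ] B) : Prop :=
  ∀ a : A, ∃ k c : A, φ k = 0 ∧ (∀ b : A, φ b = 0 → c * b = 0) ∧ a = k + c

def HasHereditaryRange (φ : A →⋆ₙₐ[ℂ] A) : Prop :=
  ∀ u ∈ Set.range φ, ∀ u' ∈ Set.range φ, ∀ x : A, u * x * u' ∈ Set.range φ

def IsReversible (φ : A →⋆ₙₐ[ℂ] A) : Prop :=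
  KerComplemented φ ∧ HasHereditaryRange φ

variable (φ : A →⋆ₙₐ[ℂ] B)

lemma mul_eq_zero_of_map_eq_zero {b c : A} (hb : φ b = 0)
    (hc : ∀ b' : A, φ b' = 0 → c * b' = 0) : b * c = 0 := by
  have hker : φ (star (b * c)) = 0 := by rw [map_star, map_mul, hb, zero_mul, star_zero]
  rw [← CStarRing.mul_star_self_eq_zero_iff, mul_assoc, hc _ hker, mul_zero]

lemma eq_zero_of_map_eq_zero {c : A} (hc : ∀ b : A, φ b = 0 → c * b = 0) (h : φ c = 0) :
    c = 0 := by
  rw [← CStarRing.mul_star_self_eq_zero_iff]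
  exact hc _ (by rw [map_star, h, star_zero])

def kerAnnihilator : NonUnitalStarSubalgebra ℂ A where
  carrier := {c | ∀ b : A, φ b = 0 → c * b = 0}
  add_mem' hx hy b hb := by rw [add_mul, hx b hb, hy b hb, add_zero]
  zero_mem' b _ := zero_mul b
  mul_mem' hx hy b hb := by rw [mul_assoc, hy b hb, mul_zero]
  smul_mem' z x hx b hb := by rw [smul_mul_assoc, hx b hb, smul_zero]
  star_mem' {c} hc b hb := by
    rw [← star_star b, ← star_mul,
      mul_eq_zero_of_map_eq_zero φ (by rw [map_star, hb, star_zero]) hc, star_zero]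

lemma mem_kerAnnihilator {c : A} : c ∈ kerAnnihilator φ ↔ ∀ b : A, φ b = 0 → c * b = 0 :=
  Iff.rfl

lemma isClosed_kerAnnihilator : IsClosed (kerAnnihilator φ : Set A) := by
  have : (kerAnnihilator φ : Set A) = ⋂ b ∈ {b | φ b = 0}, {c | c * b = 0} := by
    ext; simp [mem_kerAnnihilator]
  rw [this]
  exact isClosed_biInter fun b _ => isClosed_eq (continuous_mul_const b) continuous_const

lemma KerComplemented.isClosed_range (hφ : KerComplemented φ) : IsClosed (Set.range φ) := by
  -- makes `kerAnnihilator φ` a C*-algebra, so that an injective *-homomorphism on it is isometric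
  have : IsClosed (kerAnnihilator φ : Set A) := isClosed_kerAnnihilator φ
  let ψ := φ.comp (NonUnitalStarSubalgebraClass.subtype (kerAnnihilator φ))
  have hψ : Function.Injective ψ := by
    rw [injective_iff_map_eq_zero]
    exact fun c hc => Subtype.ext (eq_zero_of_map_eq_zero φ c.2 hc)
  have hrange : Set.range ψ = Set.range φ := by
    refine subset_antisymm (Set.range_comp_subset_range _ φ) ?_
    rintro _ ⟨a, rfl⟩
    obtain ⟨k, c, hk, hc, rfl⟩ := hφ a
    exact ⟨⟨c, hc⟩, by simp [ψ, hk]⟩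
  rw [← hrange]
  exact (isometry ψ hψ).isClosedEmbedding.isClosed_range

variable {ψ φ : A →⋆ₙₐ[ℂ] A}

lemma HasHereditaryRange.mem_range_of_add_mem_range (hφ : HasHereditaryRange φ)
    (hφc : IsClosed (Set.range φ)) {k c : A} (hk : ψ k = 0) (hc : c ∈ kerAnnihilator ψ)
    (hkc : k + c ∈ Set.range φ) : c ∈ Set.range φ := by
  refine hφc.closure_subset_iff.2 ?_ (mem_closure_image_mul_mul _ hc)
  rintro _ ⟨z, hz, rfl⟩
  have hkz : k * z = 0 := mul_eq_zero_of_map_eq_zero ψ hk hz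
  have hzk : z * k = 0 := hz k hk
  have : c * z * c = (k + c) * z * (k + c) := by
    simp only [add_mul, mul_add, hkz, hzk, mul_zero, zero_add, mul_assoc]
  show c * z * c ∈ Set.range φ
  rw [this]
  exact hφ _ hkc _ hkc z

lemma KerComplemented.comp (hψ : KerComplemented ψ) (hφ : KerComplemented φ)
    (hφh : HasHereditaryRange φ) : KerComplemented (ψ.comp φ) := by
  intro a
  obtain ⟨k₁, c₁, hk₁, hc₁, hsum⟩ := hψ (φ a)
  obtain ⟨y, hy⟩ := hφh.mem_range_of_add_mem_range hφ.isClosed_range hk₁ hc₁ (hsum ▸ ⟨a, rfl⟩)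
  obtain ⟨ky, cy, hky, hcy, rfl⟩ := hφ y
  have hcy₁ : φ cy = c₁ := by rw [← hy, map_add, hky, zero_add]
  refine ⟨a - cy, cy, ?_, fun b hb => ?_, (sub_add_cancel a cy).symm⟩
  · rw [comp_apply, map_sub, hsum, hcy₁, add_sub_cancel_right, hk₁]
  · obtain ⟨kb, cb, hkb, hcb, rfl⟩ := hφ b
    have hcycb : cy * cb = 0 := by
      refine eq_zero_of_map_eq_zero φ (mul_mem (show cy ∈ kerAnnihilator φ from hcy) hcb) ?_
      rw [map_mul, hcy₁]
      refine hc₁ _ ?_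
      simpa [hkb] using hb
    rw [mul_add, hcy kb hkb, hcycb, add_zero]

lemma HasHereditaryRange.comp (hψ : HasHereditaryRange ψ) (hφ : HasHereditaryRange φ)
    (hk : KerComplemented (ψ.comp φ)) : HasHereditaryRange (ψ.comp φ) := by
  have hmid : ∀ u ∈ Set.range (ψ.comp φ), ∀ u' ∈ Set.range (ψ.comp φ), ∀ d ∈ Set.range ψ,
      u * d * u' ∈ Set.range (ψ.comp φ) := by
    rintro _ ⟨p, rfl⟩ _ ⟨p', rfl⟩ _ ⟨y, rfl⟩
    obtain ⟨q, hq⟩ := hφ (φ p) ⟨p, rfl⟩ (φ p') ⟨p', rfl⟩ y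
    exact ⟨q, by rw [comp_apply, hq, map_mul, map_mul]; rfl⟩
  have hrange {u : A} (hu : u ∈ Set.range (ψ.comp φ)) : u ∈ NonUnitalStarAlgHom.range ψ :=
    Set.range_comp_subset_range φ ψ hu
  intro u hu u' hu' x
  rw [← hk.isClosed_range.closure_eq]
  refine map_mem_closure₂ (f := fun v v' => v * x * v') (by fun_prop)
    (mem_closure_image_mul_mul _ (hrange hu)) (mem_closure_image_mul_mul _ (hrange hu')) ?_
  rintro _ ⟨z, hz, rfl⟩ _ ⟨z', hz', rfl⟩
  have : u * z * u * x * (u' * z' * u') = u * (z * u * x * (u' * z')) * u' := by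
    simp only [mul_assoc]
  simpa only [this] using
    hmid u hu u' hu' _ (hψ _ (mul_mem hz (hrange hu)) _ (mul_mem (hrange hu') hz') x)

lemma IsReversible.comp (hψ : IsReversible ψ) (hφ : IsReversible φ) :
    IsReversible (ψ.comp φ) :=
  have hk := hψ.1.comp hφ.1 hφ.2
  ⟨hk, hψ.2.comp hφ.2 hk⟩

lemma isReversible_one : IsReversible (1 : A →⋆ₙₐ[ℂ] A) :=
  ⟨fun a => ⟨0, a, rfl, fun b hb => by rw [show b = 0 from hb, mul_zero], (zero_add a).symm⟩,
    fun u _ u' _ x => ⟨u * x * u', rfl⟩⟩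

lemma IsReversible.pow (hφ : IsReversible φ) (n : ℕ) : IsReversible (φ ^ n) := by
  induction n with
  | zero => exact isReversible_one
  | succ n ih => exact pow_succ φ n ▸ ih.comp hφ

end NonUnitalStarAlgHom

end CStarAlgebra

/-- If `(A, α)` is a reversible C*-dynamical system (complemented kernel,
hereditary range), then for every `n ∈ ℕ` the system `(A, αⁿ)` is reversible as well. -/
theorem stmt4 {A : Type*} [NonUnitalNormedRing A] [StarRing A] [CStarRing A]
    [NormedSpace ℂ A] [IsScalarTower ℂ A A] [SMulCommClass ℂ A A] [StarModule ℂ A]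
    [CompleteSpace A]
    (α : A →⋆ₙₐ[ℂ] A)
    -- `ker α` is complemented: `ker α + (ker α)^⊥ = A`
    (hker : ∀ a : A, ∃ k c : A, α k = 0 ∧ (∀ b : A, α b = 0 → c * b = 0) ∧ a = k + c)
    -- `α(A)` is a hereditary C*-subalgebra of `A`
    (hher : ∀ u ∈ Set.range ⇑α, ∀ u' ∈ Set.range ⇑α, ∀ x : A, u * x * u' ∈ Set.range ⇑α) :
    ∀ n : ℕ,
      -- `ker (αⁿ)` is complemented: `ker (αⁿ) + (ker (αⁿ))^⊥ = A`
      (∀ a : A, ∃ k c : A, (⇑α)^[n] k = 0 ∧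
        (∀ b : A, (⇑α)^[n] b = 0 → c * b = 0) ∧ a = k + c) ∧
      -- `αⁿ(A)` is a hereditary C*-subalgebra of `A`
      (∀ u ∈ Set.range ((⇑α)^[n]), ∀ u' ∈ Set.range ((⇑α)^[n]), ∀ x : A,
        u * x * u' ∈ Set.range ((⇑α)^[n])) := by
  let _ : NonUnitalCStarAlgebra A := { }
  intro n
  have h := NonUnitalStarAlgHom.IsReversible.pow (φ := α) ⟨hker, hher⟩ n
  rwa [NonUnitalStarAlgHom.IsReversible, NonUnitalStarAlgHom.KerComplemented,
    NonUnitalStarAlgHom.HasHereditaryRange, NonUnitalStarAlgHom.coe_pow] at h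
end

section
/- Let (A, α) be a C*-dynamical system such that ker α is a complemented ideal of A, and let I be an invariant ideal of (A, α), i.e. a closed two-sided ideal with α(I) ⊆ I and (ker α)^⊥ ∩ α⁻¹(I) ⊆ I. Let q_I : A → A/I be the quotient map onto the quotient C*-algebra, let α_I : A/I → A/I be the induced *-homomorphism α_I(a + I) = α(a) + I, and let α|_I : I → I be the restriction of α. Then ker α_I is a complemented ideal of A/I and ker α|_I is a complemented ideal of I, with (ker α_I)^⊥ = q_I((ker α)^⊥) and (ker α|_I)^⊥ = (ker α)^⊥ ∩ I, where the first annihilator is taken in A/I and the second in I. -/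
private lemma triple_zero {A : Type*} [NonUnitalNormedRing A] [StarRing A] [CStarRing A]
    {x : A} (h : x * (star x * x) = 0) : x = 0 := by
  have hy : (x * star x) * (x * star x) = 0 := by
    calc (x * star x) * (x * star x) = (x * (star x * x)) * star x := by noncomm_ring
      _ = 0 := by rw [h, zero_mul]
  have hysa : star (x * star x) = x * star x := by rw [star_mul, star_star]
  have hy0 : x * star x = 0 := by
    have h1 : ‖x * star x‖ * ‖x * star x‖ = 0 := by
      rw [← CStarRing.norm_self_mul_star (x := x * star x), hysa, hy, norm_zero]
    have := mul_self_eq_zero.mp h1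
    rwa [norm_eq_zero] at this
  have h2 : ‖x‖ * ‖x‖ = 0 := by rw [← CStarRing.norm_self_mul_star, hy0, norm_zero]
  rw [← norm_eq_zero]
  exact mul_self_eq_zero.mp h2


open Unitization in
lemma cstar_key {A : Type*} [NonUnitalCStarAlgebra A] {I : Set A} (hIc : IsClosed I)
    {k : A} (hI : ∀ x : A, (k * star k) * x ∈ I) : k ∈ I := by
  letI : PartialOrder (Unitization ℂ A) := CStarAlgebra.spectralOrder _
  letI : StarOrderedRing (Unitization ℂ A) := CStarAlgebra.spectralOrderedRing _
  rw [← hIc.closure_eq]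
  refine Metric.mem_closure_iff.mpr fun δ hδ => ?_
  set c : ℂ := ((δ^2 : ℝ) : ℂ) with hc
  set hB : Unitization ℂ A := ((k * star k : A) : Unitization ℂ A) with hhB
  have hBeq : hB = (k : Unitization ℂ A) * star (k : Unitization ℂ A) := by
    rw [hhB, Unitization.inr_mul, Unitization.inr_star]
  have hB0 : (0 : Unitization ℂ A) ≤ hB := hBeq ▸ mul_star_self_nonneg _
  set t : Unitization ℂ A := c • 1 + hB with ht
  have htu : IsUnit t := by
    have hne : (-(δ^2) : ℝ) ∉ spectrum ℝ hB := fun h => by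
      have := spectrum_nonneg_of_nonneg hB0 h
      nlinarith
    rw [spectrum.notMem_iff] at hne
    have halg : algebraMap ℝ (Unitization ℂ A) (δ^2) = c • 1 := by
      rw [Algebra.algebraMap_eq_smul_one, ← IsScalarTower.algebraMap_smul ℂ (δ^2 : ℝ) (1 : Unitization ℂ A)]
      norm_num [hc]
    have hneg : algebraMap ℝ (Unitization ℂ A) (-(δ^2)) - hB = -t := by
      rw [map_neg, halg, ht]; abel
    rw [hneg] at hne
    exact (IsUnit.neg_iff t).mp hne
  have htsa : star t = t := by
    rw [ht, star_add, star_smul, star_one, hc]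
    simp [Complex.conj_ofReal, (IsSelfAdjoint.of_nonneg hB0).star_eq]
  set v : Unitization ℂ A := Ring.inverse t with hv
  have hv1 : v * t = 1 := Ring.inverse_mul_cancel t htu
  have hv2 : t * v = 1 := Ring.mul_inverse_cancel t htu
  have hvsa : star v = v := by
    have h1 : star v * t = 1 := by
      rw [← htsa, ← star_mul, hv2, star_one]
    calc star v = star v * (t * v) := by rw [hv2, mul_one]
      _ = (star v * t) * v := by rw [mul_assoc]
      _ = v := by rw [h1, one_mul]
  have htB : t * hB = hB * t := by
    rw [ht]; simp [add_mul, mul_add, smul_mul_assoc, mul_smul_comm]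
  -- decomposition
  set z : Unitization ℂ A := c • (v * (k : Unitization ℂ A)) with hz
  have hdecomp : (k : Unitization ℂ A) = z + hB * (v * (k : Unitization ℂ A)) := by
    calc (k : Unitization ℂ A) = (t * v) * (k : Unitization ℂ A) := by rw [hv2, one_mul]
      _ = t * (v * (k : Unitization ℂ A)) := by rw [mul_assoc]
      _ = z + hB * (v * (k : Unitization ℂ A)) := by
          rw [ht, add_mul, smul_mul_assoc, one_mul, hz]
  set w : A := (v * (k : Unitization ℂ A)).snd with hwdef
  have hw : v * (k : Unitization ℂ A) = (w : Unitization ℂ A) := by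
    refine Unitization.ext ?_ rfl
    simp [Unitization.fst_mul]
  -- norm bound on z
  set y : Unitization ℂ A := v * hB * v with hy
  have hy0 : (0 : Unitization ℂ A) ≤ y := by
    have := star_left_conjugate_nonneg hB0 v
    rwa [hvsa, ← hy] at this
  set d : ℂ := ((4 * δ^2 : ℝ) : ℂ) with hd
  have hs : t * t - d • hB = (hB - c • 1) * (hB - c • 1) := by
    rw [ht, hd, hc]
    simp only [add_mul, mul_add, sub_mul, mul_sub, smul_mul_assoc, mul_smul_comm, smul_smul,
      one_mul, mul_one]
    push_cast
    module
  have hle : d • hB ≤ t * t := by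
    rw [← sub_nonneg, hs]
    have hssa : star (hB - c • 1) = hB - c • 1 := by
      rw [star_sub, star_smul, star_one, hc, (IsSelfAdjoint.of_nonneg hB0).star_eq]
      simp [Complex.conj_ofReal]
    calc (0 : Unitization ℂ A) ≤ star (hB - c • 1) * (hB - c • 1) := star_mul_self_nonneg _
      _ = (hB - c • 1) * (hB - c • 1) := by rw [hssa]
  have hd0 : (0 : Unitization ℂ A) ≤ d • hB := by
    have h1 : (0 : Unitization ℂ A) ≤
        (((2*δ : ℝ) : ℂ) • (k : Unitization ℂ A)) * star (((2*δ : ℝ) : ℂ) • (k : Unitization ℂ A)) :=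
      mul_star_self_nonneg _
    have h2 : (((2*δ : ℝ) : ℂ) • (k : Unitization ℂ A)) * star (((2*δ : ℝ) : ℂ) • (k : Unitization ℂ A))
        = d • hB := by
      rw [star_smul, smul_mul_assoc, mul_smul_comm, smul_smul, hBeq, hd]
      congr 1
      simp [Complex.conj_ofReal]
      push_cast
      ring
    rwa [h2] at h1
  have hdy0 : (0 : Unitization ℂ A) ≤ d • y := by
    have := star_left_conjugate_nonneg hd0 v
    rwa [hvsa, mul_smul_comm, smul_mul_assoc, ← hy] at this
  have hdy1 : d • y ≤ 1 := by
    have h1 : star v * (d • hB) * v ≤ star v * (t * t) * v := star_left_conjugate_le_conjugate hle v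
    rwa [hvsa, mul_smul_comm, smul_mul_assoc, ← hy,
      show v * (t * t) * v = (v * t) * (t * v) by rw [mul_assoc, mul_assoc, mul_assoc],
      hv1, hv2, one_mul] at h1
  have hynorm : ‖y‖ ≤ 1 / (4 * δ^2) := by
    have h1 : ‖d • y‖ ≤ ‖(1 : Unitization ℂ A)‖ :=
      CStarAlgebra.norm_le_norm_of_nonneg_of_le hdy0 hdy1
    rw [norm_one, norm_smul, hd] at h1
    have h2 : ‖((4 * δ^2 : ℝ) : ℂ)‖ = 4 * δ^2 := by
      rw [Complex.norm_real, Real.norm_eq_abs, abs_of_pos (by positivity)]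
    rw [h2] at h1
    rw [le_div_iff₀ (by positivity)]
    linarith [mul_comm (4*δ^2) ‖y‖ ▸ h1]
  have hzz : z * star z = ((δ^4 : ℝ) : ℂ) • y := by
    rw [hz, star_smul, smul_mul_assoc, mul_smul_comm, smul_smul, star_mul, ← Unitization.inr_star]
    have : v * (k : Unitization ℂ A) * (star (k : A) * star v)
        = v * hB * v := by
      rw [hBeq, Unitization.inr_star, hvsa]
      noncomm_ring
    rw [this, ← hy, hc]
    congr 1
    simp [Complex.conj_ofReal]
    push_cast
    ring
  have hznorm : ‖z‖ ≤ δ / 2 := by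
    have h1 : ‖z‖ * ‖z‖ ≤ δ^4 * (1/(4*δ^2)) := by
      calc ‖z‖ * ‖z‖ = ‖z * star z‖ := (CStarRing.norm_self_mul_star).symm
        _ = ‖((δ^4 : ℝ) : ℂ) • y‖ := by rw [hzz]
        _ = δ^4 * ‖y‖ := by
            rw [norm_smul, Complex.norm_real, Real.norm_eq_abs, abs_of_pos (by positivity)]
        _ ≤ δ^4 * (1/(4*δ^2)) := mul_le_mul_of_nonneg_left hynorm (by positivity)
    have h2 : δ^4 * (1/(4*δ^2)) = (δ/2)^2 := by field_simp; ring
    nlinarith [norm_nonneg z, hδ]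
  refine ⟨(k * star k) * w, hI w, ?_⟩
  rw [dist_eq_norm, ← Unitization.norm_inr (𝕜 := ℂ) (k - k * star k * w)]
  have hfin : ((k - k * star k * w : A) : Unitization ℂ A) = z := by
    rw [Unitization.inr_sub ℂ, Unitization.inr_mul ℂ, ← hhB, ← hw]
    nth_rewrite 1 [hdecomp]
    abel
  rw [hfin]
  linarith [hznorm]

/-- Let `(A, α)` be a C*-dynamical system with complemented kernel, and let
`I` be an invariant closed two-sided ideal (`α(I) ⊆ I` and `(ker α)^⊥ ∩ α⁻¹(I) ⊆ I`). Then
the induced endomorphism `α_I` of `A/I` and the restriction `α|_I` of `α` to `I` have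
complemented kernels, with `(ker α_I)^⊥ = q_I((ker α)^⊥)` and
`(ker α|_I)^⊥ = (ker α)^⊥ ∩ I`. Statements about the quotient C*-algebra `A/I` are encoded
via cosets: an element of `A/I` is `q_I a` for `a : A`, membership of `q_I a` in an ideal of
`A/I` is membership of `a` in its preimage, and `q_I a = q_I b` iff `a - b ∈ I`. -/
theorem stmt5 {A : Type*} [NonUnitalNormedRing A] [StarRing A] [CStarRing A]
    [NormedSpace ℂ A] [IsScalarTower ℂ A A] [SMulCommClass ℂ A A] [StarModule ℂ A]
    [CompleteSpace A]
    (α : A →⋆ₙₐ[ℂ] A) (I : Set A)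
    -- `I` is a closed two-sided ideal of `A`
    (hIc : IsClosed I) (hI0 : (0 : A) ∈ I)
    (hIadd : ∀ a ∈ I, ∀ b ∈ I, a + b ∈ I) (hIneg : ∀ a ∈ I, -a ∈ I)
    (hIl : ∀ a ∈ I, ∀ x : A, x * a ∈ I) (hIr : ∀ a ∈ I, ∀ x : A, a * x ∈ I)
    -- `ker α` is complemented: `ker α + (ker α)^⊥ = A`
    (hker : ∀ a : A, ∃ k c : A, α k = 0 ∧ (∀ b : A, α b = 0 → c * b = 0) ∧ a = k + c)
    -- `I` is invariant: `α(I) ⊆ I` and `(ker α)^⊥ ∩ α⁻¹(I) ⊆ I`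
    (hpos : ∀ a ∈ I, α a ∈ I)
    (hneg : ∀ a : A, (∀ b : A, α b = 0 → a * b = 0) → α a ∈ I → a ∈ I) :
    -- `ker α_I` is complemented in `A/I`: every coset decomposes as a sum of a coset in
    -- `ker α_I = {q_I k : α k ∈ I}` and one in `(ker α_I)^⊥ = {q_I c : ∀ b, α b ∈ I → c b ∈ I}`
    (∀ a : A, ∃ k c : A, α k ∈ I ∧ (∀ b : A, α b ∈ I → c * b ∈ I) ∧ a - (k + c) ∈ I) ∧
    -- `(ker α_I)^⊥ = q_I ((ker α)^⊥)`: the preimage in `A` of the annihilator of `ker α_I`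
    -- equals `(ker α)^⊥ + I`
    ({a : A | ∀ b : A, α b ∈ I → a * b ∈ I} =
      {a : A | ∃ c : A, (∀ b : A, α b = 0 → c * b = 0) ∧ a - c ∈ I}) ∧
    -- `ker (α|_I)` is complemented in `I`
    (∀ a ∈ I, ∃ k ∈ I, ∃ c ∈ I, α k = 0 ∧ (∀ b ∈ I, α b = 0 → c * b = 0) ∧ a = k + c) ∧
    -- `(ker α|_I)^⊥ = (ker α)^⊥ ∩ I` (the annihilator on the left is taken in `I`)
    ({a : A | a ∈ I ∧ ∀ b ∈ I, α b = 0 → a * b = 0} =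
      {a : A | a ∈ I ∧ ∀ b : A, α b = 0 → a * b = 0}) := by
  refine ⟨?_, ?_, ?_, ?_⟩
  case _ =>
    -- part 1
    intro a
    obtain ⟨k, c, hk, hc, rfl⟩ := hker a
    refine ⟨k, c, by rw [hk]; exact hI0, ?_, by simpa using hI0⟩
    intro b hb
    obtain ⟨k', c', hk', hc', rfl⟩ := hker b
    have hαc' : α c' ∈ I := by rwa [map_add, hk', zero_add] at hb
    have hc'I : c' ∈ I := hneg c' hc' hαc'
    rw [mul_add, hc k' hk', zero_add]
    exact hIl c' hc'I c
  case _ =>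
    -- part 2
    letI : NonUnitalCStarAlgebra A :=
      { ‹NonUnitalNormedRing A›, ‹StarRing A›, ‹CStarRing A›, ‹NormedSpace ℂ A›,
        ‹IsScalarTower ℂ A A›, ‹SMulCommClass ℂ A A›, ‹StarModule ℂ A›,
        ‹CompleteSpace A› with }
    ext a
    simp only [Set.mem_setOf_eq]
    constructor
    · intro ha
      obtain ⟨k, c, hk, hc, rfl⟩ := hker a
      refine ⟨c, hc, ?_⟩
      have hkey : k ∈ I := by
        apply cstar_key hIc
        intro x
        have hb : α (star k * x) = 0 := by rw [map_mul, map_star, hk, star_zero, zero_mul]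
        have h1 : (k + c) * (star k * x) ∈ I := ha _ (by rw [hb]; exact hI0)
        have h2 : (k + c) * (star k * x) = k * star k * x + c * (star k * x) := by
          rw [add_mul, mul_assoc]
        rwa [h2, hc _ hb, add_zero] at h1
      simpa using hkey
    · rintro ⟨c, hc, hd⟩ b hb
      obtain ⟨k', c', hk', hc', rfl⟩ := hker b
      have hαc' : α c' ∈ I := by rwa [map_add, hk', zero_add] at hb
      have hc'I : c' ∈ I := hneg c' hc' hαc'
      have h1 : a * (k' + c') = (a - c) * (k' + c') + (c * k' + c * c') := by
        noncomm_ring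
      rw [h1, hc k' hk', zero_add]
      exact hIadd _ (hIr _ hd _) _ (hIl c' hc'I c)
  case _ =>
    -- part 3
    intro a ha
    obtain ⟨k, c, hk, hc, rfl⟩ := hker a
    have hαc : α c ∈ I := by
      have := hpos _ ha
      rwa [map_add, hk, zero_add] at this
    have hcI : c ∈ I := hneg c hc hαc
    have hkI : k ∈ I := by
      have h := hIadd _ ha _ (hIneg _ hcI)
      rwa [add_neg_cancel_right] at h
    exact ⟨k, hkI, c, hcI, hk, fun b _ hb => hc b hb, rfl⟩
  case _ =>
    -- part 4
    ext a
    simp only [Set.mem_setOf_eq]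
    constructor
    · rintro ⟨ha, h⟩
      refine ⟨ha, fun b hb => ?_⟩
      set x := a * b with hx
      have hxI : x ∈ I := hIr a ha b
      have hb' : b * (star x * x) ∈ I := hIl _ (hIl x hxI (star x)) b
      have hαb' : α (b * (star x * x)) = 0 := by rw [map_mul, hb, zero_mul]
      have h0 : a * (b * (star x * x)) = 0 := h _ hb' hαb'
      apply triple_zero (x := x)
      calc x * (star x * x) = a * (b * (star x * x)) := by rw [hx, mul_assoc]
        _ = 0 := h0
    · rintro ⟨ha, h⟩
      exact ⟨ha, fun b _ hb => h b hb⟩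
end

section
/- Let (A, α) be a reversible C*-dynamical system (ker α is a complemented ideal of A and α(A) is a hereditary C*-subalgebra of A), and let I be an invariant ideal of (A, α), i.e. a closed two-sided ideal with α(I) ⊆ I and (ker α)^⊥ ∩ α⁻¹(I) ⊆ I. Then the quotient system (A/I, α_I), where α_I(a + I) = α(a) + I, and the restricted system (I, α|_I) are both reversible: ker α_I is complemented in A/I and α_I(A/I) is hereditary in A/I, and ker α|_I is complemented in I and α(I) is a hereditary C*-subalgebra of I. -/
/-- Let `(A, α)` be a reversible C*-dynamical system (complemented kernel
and hereditary range) and `I` an invariant closed two-sided ideal. Then the quotient system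
`(A/I, α_I)` and the restricted system `(I, α|_I)` are both reversible. Statements about
`A/I` are encoded via cosets through the quotient map `q_I` (so `q_I a = q_I b` iff
`a - b ∈ I`). -/
theorem stmt6 {A : Type*} [NonUnitalNormedRing A] [StarRing A] [CStarRing A]
    [NormedSpace ℂ A] [IsScalarTower ℂ A A] [SMulCommClass ℂ A A] [StarModule ℂ A]
    [CompleteSpace A]
    (α : A →⋆ₙₐ[ℂ] A) (I : Set A)
    -- `I` is a closed two-sided ideal of `A`
    (hIc : IsClosed I) (hI0 : (0 : A) ∈ I)
    (hIadd : ∀ a ∈ I, ∀ b ∈ I, a + b ∈ I) (hIneg : ∀ a ∈ I, -a ∈ I)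
    (hIl : ∀ a ∈ I, ∀ x : A, x * a ∈ I) (hIr : ∀ a ∈ I, ∀ x : A, a * x ∈ I)
    -- `(A, α)` is reversible: complemented kernel and hereditary range
    (hker : ∀ a : A, ∃ k c : A, α k = 0 ∧ (∀ b : A, α b = 0 → c * b = 0) ∧ a = k + c)
    (hher : ∀ u ∈ Set.range ⇑α, ∀ u' ∈ Set.range ⇑α, ∀ x : A, u * x * u' ∈ Set.range ⇑α)
    -- `I` is invariant: `α(I) ⊆ I` and `(ker α)^⊥ ∩ α⁻¹(I) ⊆ I`
    (hpos : ∀ a ∈ I, α a ∈ I)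
    (hneg : ∀ a : A, (∀ b : A, α b = 0 → a * b = 0) → α a ∈ I → a ∈ I) :
    -- `ker α_I` is complemented in `A/I`
    (∀ a : A, ∃ k c : A, α k ∈ I ∧ (∀ b : A, α b ∈ I → c * b ∈ I) ∧ a - (k + c) ∈ I) ∧
    -- the range `α_I(A/I)` is hereditary in `A/I`:
    -- `q_I(α a) ⬝ q_I(x) ⬝ q_I(α a')` lies in the range of `α_I`
    (∀ a a' x : A, ∃ b : A, α a * x * α a' - α b ∈ I) ∧
    -- `ker (α|_I)` is complemented in `I`
    (∀ a ∈ I, ∃ k ∈ I, ∃ c ∈ I, α k = 0 ∧ (∀ b ∈ I, α b = 0 → c * b = 0) ∧ a = k + c) ∧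
    -- `α(I)` is a hereditary C*-subalgebra of `I`
    (∀ a ∈ I, ∀ a' ∈ I, ∀ x ∈ I, ∃ b ∈ I, α a * x * α a' = α b) := by
  refine ⟨?_, ?_, ?_, ?_⟩
  · intro a
    obtain ⟨k, c, hk, hc, hac⟩ := hker a
    refine ⟨k, c, by rw [hk]; exact hI0, ?_, by rw [← hac, sub_self]; exact hI0⟩
    intro b hb
    obtain ⟨kb, cb, hkb, hcb, hbe⟩ := hker b
    have hacb : α cb ∈ I := by
      have : α b = α cb := by rw [hbe, map_add, hkb, zero_add]
      rwa [this] at hb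
    have hcbI : cb ∈ I := hneg cb hcb hacb
    have : c * b = c * cb := by
      rw [hbe, mul_add, hc kb hkb, zero_add]
    rw [this]
    exact hIl cb hcbI c
  · intro a a' x
    obtain ⟨b, hb⟩ := hher (α a) ⟨a, rfl⟩ (α a') ⟨a', rfl⟩ x
    exact ⟨b, by rw [hb, sub_self]; exact hI0⟩
  · intro a ha
    obtain ⟨k, c, hk, hc, hac⟩ := hker a
    have hαc : α c ∈ I := by
      have : α a = α c := by rw [hac, map_add, hk, zero_add]
      rw [← this]; exact hpos a ha
    have hcI : c ∈ I := hneg c hc hαc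
    have hkI : k ∈ I := by
      have : k = a + -c := by rw [hac]; abel
      rw [this]; exact hIadd a ha _ (hIneg c hcI)
    exact ⟨k, hkI, c, hcI, hk, fun b _ hb => hc b hb, hac⟩
  · intro a ha a' ha' x hx
    obtain ⟨b, hb⟩ := hher (α a) ⟨a, rfl⟩ (α a') ⟨a', rfl⟩ x
    obtain ⟨k, c, hk, hc, hbe⟩ := hker b
    have hαb : α b ∈ I := by
      rw [hb]; exact hIr _ (hIl x hx (α a)) (α a')
    have hαc : α c ∈ I := by
      have : α b = α c := by rw [hbe, map_add, hk, zero_add]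
      rwa [this] at hαb
    have hcI : c ∈ I := hneg c hc hαc
    refine ⟨c, hcI, ?_⟩
    rw [← hb, hbe, map_add, hk, zero_add]
end

section
/- Let X be a locally compact Hausdorff space, Δ ⊆ X an open subset, φ : Δ → X a continuous proper map, D a C*-algebra, and for each x ∈ Δ let α_x : D → D be a *-homomorphism such that for every d ∈ D the map Δ ∋ x ↦ α_x(d) ∈ D is continuous. Then for every a ∈ C₀(X, D) the function X → D sending x to α_x(a(φ(x))) for x ∈ Δ and to 0 for x ∉ Δ is continuous and vanishes at infinity, and the resulting map α : C₀(X, D) → C₀(X, D) is a *-homomorphism; it is the unique *-homomorphism of C₀(X, D) satisfying α(a)(x) = α_x(a(φ(x))) for all a ∈ C₀(X, D) and x ∈ Δ and α(a)(x) = 0 for x ∉ Δ. -/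
open scoped ZeroAtInfty Classical

open Filter Topology

/-!
The map factors as `a ↦ a ∘ φ`, then `g ↦ (x ↦ α_x (g x))`, then extension by zero from `Δ` to
`X`. Properness of `φ` keeps `a ∘ φ` vanishing at infinity on `Δ`. Since *-homomorphisms of
C*-algebras are contractive, the family `α_x` is equicontinuous, so the second step preserves
continuity, and it preserves decay by the bound `‖α_x (g x)‖ ≤ ‖g x‖`. Finally, the set where
`‖g‖ ≥ ε` is compact in `Δ`, hence closed in the Hausdorff space `X`, which gives continuity of
the zero extension at points outside the open set `Δ`.
-/

section LipschitzFamily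

variable {Y E F : Type*} [TopologicalSpace Y] [PseudoMetricSpace E] [PseudoMetricSpace F]

theorem Continuous.apply_of_lipschitzWith {K : NNReal} {T : Y → E → F}
    (hT : ∀ e, Continuous fun y => T y e) (hK : ∀ y, LipschitzWith K (T y))
    {g : Y → E} (hg : Continuous g) : Continuous fun y => T y (g y) := by
  refine continuous_iff_continuousAt.mpr fun y₀ => ?_
  rw [ContinuousAt, tendsto_iff_dist_tendsto_zero]
  have hbound : ∀ y, dist (T y (g y)) (T y₀ (g y₀)) ≤
      K * dist (g y) (g y₀) + dist (T y (g y₀)) (T y₀ (g y₀)) := fun y =>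
    (dist_triangle _ (T y (g y₀)) _).trans
      (add_le_add_left ((hK y).dist_le_mul _ _) _)
  refine squeeze_zero (fun _ => dist_nonneg) hbound ?_
  have hg₀ := tendsto_iff_dist_tendsto_zero.mp (hg.tendsto y₀)
  have hT₀ := tendsto_iff_dist_tendsto_zero.mp ((hT (g y₀)).tendsto y₀)
  simpa using (hg₀.const_mul (K : ℝ)).add hT₀

end LipschitzFamily

namespace ZeroAtInftyContinuousMap

section ExtendByZero

variable {X D : Type*} [TopologicalSpace X] [TopologicalSpace D] [Zero D] {Δ : Set X}

theorem exists_isCompact_subset_forall_notMem_dite_mem (g : C₀(Δ, D)) {U : Set D}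
    (hU : U ∈ 𝓝 0) :
    ∃ K : Set X, IsCompact K ∧ K ⊆ Δ ∧
      ∀ x ∉ K, (if h : x ∈ Δ then g ⟨x, h⟩ else 0) ∈ U := by
  obtain ⟨t, ht, htU⟩ := mem_cocompact.mp (zero_at_infty g hU)
  refine ⟨Subtype.val '' t, ht.image continuous_subtype_val, by simp, fun x hx => ?_⟩
  by_cases h : x ∈ Δ
  · rw [dif_pos h]
    exact htU fun hxt => hx ⟨⟨x, h⟩, hxt, rfl⟩
  · rw [dif_neg h]
    exact mem_of_mem_nhds hU

noncomputable def extendByZero [T2Space X] (hΔ : IsOpen Δ) (g : C₀(Δ, D)) : C₀(X, D) where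
  toFun x := if h : x ∈ Δ then g ⟨x, h⟩ else 0
  continuous_toFun := by
    refine continuous_iff_continuousAt.mpr fun x₀ => ?_
    by_cases h₀ : x₀ ∈ Δ
    · refine (continuousOn_iff_continuous_domRestrict.mpr ?_).continuousAt (hΔ.mem_nhds h₀)
      convert g.continuous using 1
      funext x
      simp [x.2]
    · intro U hU
      simp only [dif_neg h₀] at hU
      obtain ⟨K, hK, hKΔ, hKU⟩ := exists_isCompact_subset_forall_notMem_dite_mem g hU
      exact mem_map.mpr <| mem_of_superset
        (hK.isClosed.isOpen_compl.mem_nhds fun hx => h₀ (hKΔ hx)) fun x hx => hKU x hx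
  zero_at_infty' := fun U hU => by
    obtain ⟨K, hK, -, hKU⟩ := exists_isCompact_subset_forall_notMem_dite_mem g hU
    exact mem_map.mpr <| mem_of_superset hK.compl_mem_cocompact fun x hx => hKU x hx

theorem extendByZero_apply [T2Space X] (hΔ : IsOpen Δ) (g : C₀(Δ, D)) (x : X) :
    extendByZero hΔ g x = if h : x ∈ Δ then g ⟨x, h⟩ else 0 :=
  rfl

end ExtendByZero

section Twisted

variable {X Y D : Type*} [TopologicalSpace X] [T2Space X] [TopologicalSpace Y]
  [NonUnitalNormedRing D] [StarRing D] [CStarRing D] [NormedSpace ℂ D]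
  [IsScalarTower ℂ D D] [SMulCommClass ℂ D D] [StarModule ℂ D] [CompleteSpace D]

noncomputable local instance : NonUnitalCStarAlgebra D := {}

noncomputable def applyFamily (T : Y → D →⋆ₙₐ[ℂ] D) (hT : ∀ d, Continuous fun y => T y d)
    (g : C₀(Y, D)) : C₀(Y, D) where
  toFun y := T y (g y)
  continuous_toFun := Continuous.apply_of_lipschitzWith hT
    (fun y => AddMonoidHomClass.lipschitz_of_bound_nnnorm (T y) 1 fun d => by
      simpa using NonUnitalStarAlgHom.nnnorm_apply_le (T y) d) g.continuous
  zero_at_infty' := squeeze_zero_norm (fun y => NonUnitalStarAlgHom.norm_apply_le (T y) (g y))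
    (tendsto_zero_iff_norm_tendsto_zero.mp (zero_at_infty g))

theorem applyFamily_apply (T : Y → D →⋆ₙₐ[ℂ] D) (hT : ∀ d, Continuous fun y => T y d)
    (g : C₀(Y, D)) (y : Y) : applyFamily T hT g y = T y (g y) :=
  rfl

variable {Δ : Set X}

noncomputable def twistedComp (hΔ : IsOpen Δ) (φ : CocompactMap Δ X) (T : Δ → D →⋆ₙₐ[ℂ] D)
    (hT : ∀ d, Continuous fun x => T x d) : C₀(X, D) →⋆ₙₐ[ℂ] C₀(X, D) where
  toFun a := extendByZero hΔ (applyFamily T hT (a.comp φ))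
  map_smul' c a := by
    ext x; by_cases h : x ∈ Δ <;> simp [extendByZero_apply, applyFamily_apply, h]
  map_zero' := by
    ext x; by_cases h : x ∈ Δ <;> simp [extendByZero_apply, applyFamily_apply, h]
  map_add' a b := by
    ext x; by_cases h : x ∈ Δ <;> simp [extendByZero_apply, applyFamily_apply, h]
  map_mul' a b := by
    ext x; by_cases h : x ∈ Δ <;> simp [extendByZero_apply, applyFamily_apply, h]
  map_star' a := by
    ext x; by_cases h : x ∈ Δ <;> simp [extendByZero_apply, applyFamily_apply, h, map_star]

theorem twistedComp_apply (hΔ : IsOpen Δ) (φ : CocompactMap Δ X) (T : Δ → D →⋆ₙₐ[ℂ] D)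
    (hT : ∀ d, Continuous fun x => T x d) (a : C₀(X, D)) (x : X) :
    twistedComp hΔ φ T hT a x = if h : x ∈ Δ then T ⟨x, h⟩ (a (φ ⟨x, h⟩)) else 0 :=
  rfl

end Twisted

end ZeroAtInftyContinuousMap

theorem stmt7_general {X : Type*} [TopologicalSpace X] [T2Space X]
    {D : Type*} [NonUnitalNormedRing D] [StarRing D] [CStarRing D]
    [NormedSpace ℂ D] [IsScalarTower ℂ D D] [SMulCommClass ℂ D D] [StarModule ℂ D]
    [CompleteSpace D]
    (Δ : Set X) (hΔ : IsOpen Δ) (φ : Δ → X) (hφc : Continuous φ)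
    (hφp : ∀ K : Set X, IsCompact K → IsCompact (φ ⁻¹' K))
    (T : Δ → (D →⋆ₙₐ[ℂ] D)) (hT : ∀ d : D, Continuous fun x : Δ => T x d) :
    -- for every `a ∈ C₀(X, D)` the pointwise formula defines an element of `C₀(X, D)`,
    -- i.e. a continuous function vanishing at infinity
    (∀ a : C₀(X, D), ∃ F : C₀(X, D), ∀ x : X,
      F x = if h : x ∈ Δ then T ⟨x, h⟩ (a (φ ⟨x, h⟩)) else 0) ∧
    -- and there is a unique *-homomorphism `α` of `C₀(X, D)` realizing this formula
    (∃! α : C₀(X, D) →⋆ₙₐ[ℂ] C₀(X, D), ∀ (a : C₀(X, D)) (x : X),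
      α a x = if h : x ∈ Δ then T ⟨x, h⟩ (a (φ ⟨x, h⟩)) else 0) := by
  let φ' : CocompactMap Δ X := ⟨⟨φ, hφc⟩,
    hasBasis_cocompact.tendsto_right_iff.mpr fun K hK => (hφp K hK).compl_mem_cocompact⟩
  let α := ZeroAtInftyContinuousMap.twistedComp hΔ φ' T hT
  have hα := ZeroAtInftyContinuousMap.twistedComp_apply hΔ φ' T hT
  refine ⟨fun a => ⟨α a, hα a⟩, α, hα, fun β hβ => ?_⟩
  ext a x
  exact (hβ a x).trans (hα a x).symm

/-- Given an open set `Δ ⊆ X`, a continuous proper map `φ : Δ → X` and a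
continuous bundle of *-homomorphisms `α_x : D → D` (`x ∈ Δ`), the formula
`α(a)(x) = α_x(a(φ x))` for `x ∈ Δ`, `α(a)(x) = 0` otherwise, gives a well-defined element
of `C₀(X, D)` for every `a ∈ C₀(X, D)`, and determines a unique *-homomorphism of
`C₀(X, D)`. -/
theorem stmt7 {X : Type*} [TopologicalSpace X] [LocallyCompactSpace X] [T2Space X]
    {D : Type*} [NonUnitalNormedRing D] [StarRing D] [CStarRing D]
    [NormedSpace ℂ D] [IsScalarTower ℂ D D] [SMulCommClass ℂ D D] [StarModule ℂ D]
    [CompleteSpace D]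
    (Δ : Set X) (hΔ : IsOpen Δ) (φ : Δ → X) (hφc : Continuous φ)
    (hφp : ∀ K : Set X, IsCompact K → IsCompact (φ ⁻¹' K))
    (T : Δ → (D →⋆ₙₐ[ℂ] D)) (hT : ∀ d : D, Continuous fun x : Δ => T x d) :
    -- for every `a ∈ C₀(X, D)` the pointwise formula defines an element of `C₀(X, D)`,
    -- i.e. a continuous function vanishing at infinity
    (∀ a : C₀(X, D), ∃ F : C₀(X, D), ∀ x : X,
      F x = if h : x ∈ Δ then T ⟨x, h⟩ (a (φ ⟨x, h⟩)) else 0) ∧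
    -- and there is a unique *-homomorphism `α` of `C₀(X, D)` realizing this formula
    (∃! α : C₀(X, D) →⋆ₙₐ[ℂ] C₀(X, D), ∀ (a : C₀(X, D)) (x : X),
      α a x = if h : x ∈ Δ then T ⟨x, h⟩ (a (φ ⟨x, h⟩)) else 0) :=
  stmt7_general Δ hΔ φ hφc hφp T hT
end

section
/- Let X be a locally compact Hausdorff space, Δ ⊆ X open, φ : Δ → X continuous and proper, D a nonzero C*-algebra, and for each x ∈ Δ let α_x : D → D be a *-homomorphism such that for every d ∈ D the map Δ ∋ x ↦ α_x(d) ∈ D is continuous. Assume that every nonzero α_x (x ∈ Δ) is injective. Then the set Δ₀ := {x ∈ Δ : α_x ≠ 0} is both open and closed in the subspace Δ. -/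
open scoped ZeroAtInfty

/-- With `X` locally compact Hausdorff, `Δ ⊆ X` open, `φ : Δ → X`
continuous proper, `D` a nonzero C*-algebra and `x ↦ α_x` a pointwise-continuous family of
*-homomorphisms of `D` such that every nonzero `α_x` is injective, the set
`Δ₀ = {x ∈ Δ : α_x ≠ 0}` is clopen in the subspace `Δ`. -/
theorem stmt8 {X : Type*} [TopologicalSpace X] [LocallyCompactSpace X] [T2Space X]
    {D : Type*} [NonUnitalNormedRing D] [StarRing D] [CStarRing D]
    [NormedSpace ℂ D] [IsScalarTower ℂ D D] [SMulCommClass ℂ D D] [StarModule ℂ D]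
    [CompleteSpace D]
    (hD : ∃ d : D, d ≠ 0)
    (Δ : Set X) (hΔ : IsOpen Δ) (φ : Δ → X) (hφc : Continuous φ)
    (hφp : ∀ K : Set X, IsCompact K → IsCompact (φ ⁻¹' K))
    (T : Δ → (D →⋆ₙₐ[ℂ] D)) (hT : ∀ d : D, Continuous fun x : Δ => T x d)
    (hinj : ∀ x : Δ, T x ≠ 0 → Function.Injective (T x)) :
    IsClopen {x : Δ | T x ≠ 0} := by
  letI : NonUnitalCStarAlgebra D := { }
  obtain ⟨d, hd⟩ := hD
  constructor
  · -- closed: complement is open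
    rw [← isOpen_compl_iff]
    rw [isOpen_iff_mem_nhds]
    intro x hx
    simp only [Set.mem_compl_iff, Set.mem_setOf_eq, not_not] at hx
    have hU : IsOpen {y : Δ | ‖T y d‖ < ‖d‖} :=
      isOpen_lt (continuous_norm.comp (hT d)) continuous_const
    refine Filter.mem_of_superset (hU.mem_nhds ?_) ?_
    · simp [Set.mem_setOf_eq, hx, norm_pos_iff, hd]
    · intro y hy
      simp only [Set.mem_compl_iff, Set.mem_setOf_eq, not_not]
      by_contra hne
      have := NonUnitalStarAlgHom.norm_map (T y) (hinj y hne) d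
      rw [Set.mem_setOf_eq, this] at hy; exact lt_irrefl _ hy

  · rw [isOpen_iff_mem_nhds]
    intro x hx
    obtain ⟨e, he⟩ : ∃ e : D, T x e ≠ 0 := by
      by_contra h
      push_neg at h
      exact hx (by ext a; simpa using h a)
    have hU : IsOpen {y : Δ | T y e ≠ 0} :=
      isOpen_compl_iff.mpr (isClosed_singleton.preimage (hT e))
    refine Filter.mem_of_superset (hU.mem_nhds he) ?_
    intro y hy h0
    exact hy (by simp [h0])
end

section
/- Let X be a locally compact Hausdorff space, Δ ⊆ X open, φ : Δ → X continuous and proper, D a nonzero C*-algebra, and for each x ∈ Δ let α_x : D → D be an injective *-homomorphism such that for every d ∈ D the map Δ ∋ x ↦ α_x(d) ∈ D is continuous. Let α : C₀(X, D) → C₀(X, D) be the *-homomorphism determined by α(a)(x) = α_x(a(φ(x))) for x ∈ Δ and α(a)(x) = 0 for x ∉ Δ. If the C*-dynamical system (C₀(X, D), α) is reversible, i.e. ker α is a complemented ideal of C₀(X, D) and the range α(C₀(X, D)) is a hereditary C*-subalgebra of C₀(X, D), then φ is injective. -/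
open scoped ZeroAtInfty Classical

/-- In a C*-algebra, `e * star e * e = 0` implies `e = 0`. -/
lemma aux_mul_star_mul {D : Type*} [NonUnitalNormedRing D] [StarRing D] [CStarRing D]
    {e : D} (h : e * star e * e = 0) : e = 0 := by
  have h1 : (e * star e) * (e * star e) = 0 := by
    rw [← mul_assoc, h, zero_mul]
  have h2 : e * star e = 0 := by
    have hsa : star (e * star e) = e * star e := by rw [star_mul, star_star]
    have := CStarRing.norm_self_mul_star (x := e * star e)
    rw [hsa, h1, norm_zero] at this
    have : ‖e * star e‖ * ‖e * star e‖ = 0 := this.symm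
    exact norm_eq_zero.mp (mul_self_eq_zero.mp this)
  have := CStarRing.norm_self_mul_star (x := e)
  rw [h2] at this
  have : ‖e‖ * ‖e‖ = 0 := by simpa using this.symm
  exact norm_eq_zero.mp (mul_self_eq_zero.mp this)

/-- Build an element of `C₀(X, D)` from a compactly supported real function and a vector. -/
noncomputable def auxMk {X : Type*} [TopologicalSpace X]
    {D : Type*} [NonUnitalNormedRing D] [NormedSpace ℂ D]
    (f : C(X, ℝ)) (hf : HasCompactSupport f) (e : D) : C₀(X, D) where
  toFun := fun x => f x • e
  continuous_toFun := f.continuous.smul continuous_const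
  zero_at_infty' := by
    have := (hf.is_zero_at_infty).smul_const e (M := ℝ)
    simpa using this

@[simp] lemma auxMk_apply {X : Type*} [TopologicalSpace X]
    {D : Type*} [NonUnitalNormedRing D] [NormedSpace ℂ D]
    (f : C(X, ℝ)) (hf : HasCompactSupport f) (e : D) (x : X) :
    auxMk f hf e x = f x • e := rfl

/-- With `X` locally compact Hausdorff, `Δ ⊆ X` open, `φ : Δ → X`
continuous proper, `D` a nonzero C*-algebra, `x ↦ α_x` a pointwise-continuous family of
injective *-homomorphisms of `D`, and `α` the induced endomorphism of `C₀(X, D)`: if the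
C*-dynamical system `(C₀(X, D), α)` is reversible (complemented kernel and hereditary
range), then `φ` is injective. -/
theorem stmt9 {X : Type*} [TopologicalSpace X] [LocallyCompactSpace X] [T2Space X]
    {D : Type*} [NonUnitalNormedRing D] [StarRing D] [CStarRing D]
    [NormedSpace ℂ D] [IsScalarTower ℂ D D] [SMulCommClass ℂ D D] [StarModule ℂ D]
    [CompleteSpace D]
    (hD : ∃ d : D, d ≠ 0)
    (Δ : Set X) (hΔ : IsOpen Δ) (φ : Δ → X) (hφc : Continuous φ)
    (hφp : ∀ K : Set X, IsCompact K → IsCompact (φ ⁻¹' K))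
    (T : Δ → (D →⋆ₙₐ[ℂ] D)) (hT : ∀ d : D, Continuous fun x : Δ => T x d)
    (hinj : ∀ x : Δ, Function.Injective (T x))
    (α : C₀(X, D) →⋆ₙₐ[ℂ] C₀(X, D))
    (hα : ∀ (a : C₀(X, D)) (x : X),
      α a x = if h : x ∈ Δ then T ⟨x, h⟩ (a (φ ⟨x, h⟩)) else 0)
    -- `ker α` is complemented
    (hker : ∀ a : C₀(X, D), ∃ k c : C₀(X, D), α k = 0 ∧
      (∀ b : C₀(X, D), α b = 0 → c * b = 0) ∧ a = k + c)
    -- the range of `α` is a hereditary C*-subalgebra of `C₀(X, D)`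
    (hher : ∀ u ∈ Set.range ⇑α, ∀ u' ∈ Set.range ⇑α, ∀ x : C₀(X, D),
      u * x * u' ∈ Set.range ⇑α) :
    Function.Injective φ := by
  intro x₁ x₂ hx
  by_contra hne
  obtain ⟨d, hd⟩ := hD
  set y := φ x₁ with hy
  -- a bump function equal to 1 at y
  obtain ⟨g, hg1, -, hgc, -⟩ :=
    exists_continuous_one_zero_of_isCompact (X := X) (isCompact_singleton : IsCompact {y})
      isClosed_empty (Set.disjoint_empty _)
  set a : C₀(X, D) := auxMk g hgc d with ha
  have hay : a y = d := by
    simp [ha, hg1 (Set.mem_singleton y)]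
  set u : C₀(X, D) := α a with hu
  set e : D := T x₂ d with he
  have he0 : e ≠ 0 := fun h => hd (hinj x₂ (by simpa using h))
  -- a function equal to 1 at x₂ and 0 at x₁
  have hne' : (x₂ : X) ≠ (x₁ : X) := fun h => hne (Subtype.coe_injective h.symm)
  obtain ⟨f, hf1, hf0, hfc, -⟩ :=
    exists_continuous_one_zero_of_isCompact (X := X)
      (isCompact_singleton : IsCompact {(x₂ : X)}) (isClosed_singleton : IsClosed {(x₁ : X)})
      (by simpa using hne')
  set w : C₀(X, D) := auxMk f hfc (star e) with hw
  obtain ⟨b, hb⟩ := hher u ⟨a, rfl⟩ u ⟨a, rfl⟩ w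
  -- pointwise values of u
  have hux₁ : u (x₁ : X) = T x₁ d := by
    rw [hu, hα]
    rw [dif_pos x₁.2]
    simp [← hy, hay]
  have hux₂ : u (x₂ : X) = e := by
    rw [hu, hα]
    rw [dif_pos x₂.2]
    simp [← hx, ← hy, hay, he]
  have hwx₁ : w (x₁ : X) = 0 := by
    simp [hw, hf0 (Set.mem_singleton _)]
  have hwx₂ : w (x₂ : X) = star e := by
    simp [hw, hf1 (Set.mem_singleton _)]
  -- evaluate α b at x₁
  have hb1 : (α b) (x₁ : X) = 0 := by
    rw [hb]
    have : (u * w * u) (x₁ : X) = u (x₁ : X) * w (x₁ : X) * u (x₁ : X) := rfl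
    rw [this, hwx₁, mul_zero, zero_mul]
  have hby : b y = 0 := by
    apply hinj x₁
    rw [map_zero]
    have := hα b (x₁ : X)
    rw [dif_pos x₁.2] at this
    simpa [← hy, hb1] using this.symm
  -- evaluate α b at x₂
  have hb2 : (α b) (x₂ : X) = e * star e * e := by
    rw [hb]
    have : (u * w * u) (x₂ : X) = u (x₂ : X) * w (x₂ : X) * u (x₂ : X) := rfl
    rw [this, hux₂, hwx₂]
  have hb2' : (α b) (x₂ : X) = 0 := by
    have := hα b (x₂ : X)
    rw [dif_pos x₂.2] at this
    simpa [← hx, ← hy, hby] using this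
  exact he0 (aux_mul_star_mul (hb2 ▸ hb2'))
end

section
/- Let X be a locally compact Hausdorff space, Δ ⊆ X open, φ : Δ → X continuous and proper, D a nonzero C*-algebra, and for each x ∈ Δ let α_x : D → D be an injective *-homomorphism such that for every d ∈ D the map Δ ∋ x ↦ α_x(d) is continuous. Let α : C₀(X, D) → C₀(X, D) be the *-homomorphism determined by α(a)(x) = α_x(a(φ(x))) for x ∈ Δ and α(a)(x) = 0 for x ∉ Δ. For a closed set V ⊆ X put I_V := {a ∈ C₀(X, D) : a(x) = 0 for all x ∈ V}. Then: (1) α⁻¹(I_V) = I_{φ(V ∩ Δ)} (note φ(V ∩ Δ) is closed since φ is proper); (2) α(I_V) ⊆ I_V if and only if φ(V ∩ Δ) ⊆ V; (3) for any closed set Y ⊆ X with X ∖ φ(Δ) ⊆ Y and J := I_Y, one has J ∩ α⁻¹(I_V) ⊆ I_V if and only if V ⊆ Y ∪ φ(V ∩ Δ). -/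
open scoped ZeroAtInfty Classical

open Set Filter

/-- Bump function: for a closed set `C` not containing `y`, there is `a ∈ C₀(X, D)` with
`a y = d` and `a` vanishing on `C`. -/
lemma exists_bump {X : Type*} [TopologicalSpace X] [LocallyCompactSpace X] [T2Space X]
    {D : Type*} [NonUnitalNormedRing D] [NormedSpace ℂ D]
    (d : D) {C : Set X} (hC : IsClosed C) {y : X} (hy : y ∉ C) :
    ∃ a : C₀(X, D), a y = d ∧ ∀ x ∈ C, a x = 0 := by
  obtain ⟨f, hf1, hf0, hfc, -⟩ :=
    exists_continuous_one_zero_of_isCompact (isCompact_singleton (x := y)) hC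
      (Set.disjoint_singleton_left.mpr hy)
  have hcont : Continuous fun x : X => f x • d := (map_continuous f).smul continuous_const
  have hsupp : HasCompactSupport fun x : X => f x • d :=
    hfc.mono (fun x hx => by
      simp only [Function.mem_support, ne_eq] at hx ⊢
      intro h; exact hx (by rw [h, zero_smul]))
  refine ⟨⟨⟨fun x => f x • d, hcont⟩, hsupp.is_zero_at_infty⟩, ?_, ?_⟩
  · simp [hf1 (Set.mem_singleton y)]
  · intro x hx
    simp [hf0 hx]

/-- With `X` locally compact Hausdorff, `Δ ⊆ X` open, `φ : Δ → X`
continuous proper, `D` a nonzero C*-algebra, `x ↦ α_x` a pointwise-continuous family of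
injective *-homomorphisms of `D`, and `α` the induced endomorphism of `C₀(X, D)`, with
`I_V = {a : a vanishes on V}` for closed `V ⊆ X`:
(1) `α⁻¹(I_V) = I_{φ(V ∩ Δ)}`;
(2) `α(I_V) ⊆ I_V ↔ φ(V ∩ Δ) ⊆ V`;
(3) for closed `Y ⊇ X ∖ φ(Δ)` and `J = I_Y`:
    `J ∩ α⁻¹(I_V) ⊆ I_V ↔ V ⊆ Y ∪ φ(V ∩ Δ)`. -/
theorem stmt10 {X : Type*} [TopologicalSpace X] [LocallyCompactSpace X] [T2Space X]
    {D : Type*} [NonUnitalNormedRing D] [StarRing D] [CStarRing D]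
    [NormedSpace ℂ D] [IsScalarTower ℂ D D] [SMulCommClass ℂ D D] [StarModule ℂ D]
    [CompleteSpace D]
    (hD : ∃ d : D, d ≠ 0)
    (Δ : Set X) (hΔ : IsOpen Δ) (φ : Δ → X) (hφc : Continuous φ)
    (hφp : ∀ K : Set X, IsCompact K → IsCompact (φ ⁻¹' K))
    (T : Δ → (D →⋆ₙₐ[ℂ] D)) (hT : ∀ d : D, Continuous fun x : Δ => T x d)
    (hinj : ∀ x : Δ, Function.Injective (T x))
    (α : C₀(X, D) →⋆ₙₐ[ℂ] C₀(X, D))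
    (hα : ∀ (a : C₀(X, D)) (x : X),
      α a x = if h : x ∈ Δ then T ⟨x, h⟩ (a (φ ⟨x, h⟩)) else 0)
    (V : Set X) (hV : IsClosed V) :
    -- (1) `α⁻¹(I_V) = I_{φ(V ∩ Δ)}`
    ({a : C₀(X, D) | ∀ x ∈ V, α a x = 0} =
      {a : C₀(X, D) | ∀ x ∈ φ '' {x : Δ | (x : X) ∈ V}, a x = 0}) ∧
    -- (2) `α(I_V) ⊆ I_V ↔ φ(V ∩ Δ) ⊆ V`
    ((∀ a : C₀(X, D), (∀ x ∈ V, a x = 0) → ∀ x ∈ V, α a x = 0) ↔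
      φ '' {x : Δ | (x : X) ∈ V} ⊆ V) ∧
    -- (3) for `Y` closed containing `X ∖ φ(Δ)` and `J = I_Y`:
    --     `J ∩ α⁻¹(I_V) ⊆ I_V ↔ V ⊆ Y ∪ φ(V ∩ Δ)`
    (∀ Y : Set X, IsClosed Y → (∀ x : X, x ∉ Set.range φ → x ∈ Y) →
      ((∀ a : C₀(X, D), (∀ y ∈ Y, a y = 0) → (∀ x ∈ V, α a x = 0) →
          ∀ x ∈ V, a x = 0) ↔
        V ⊆ Y ∪ φ '' {x : Δ | (x : X) ∈ V})) := by
  obtain ⟨d, hd⟩ := hD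
  -- φ is a proper map
  have hproper : IsProperMap φ :=
    isProperMap_iff_isCompact_preimage.mpr ⟨hφc, fun K hK => hφp K hK⟩
  -- φ(V ∩ Δ) is closed
  have himcl : IsClosed (φ '' {x : Δ | (x : X) ∈ V}) :=
    hproper.isClosedMap _ (hV.preimage continuous_subtype_val)
  -- Part (1)
  have h1 : ({a : C₀(X, D) | ∀ x ∈ V, α a x = 0} =
      {a : C₀(X, D) | ∀ x ∈ φ '' {x : Δ | (x : X) ∈ V}, a x = 0}) := by
    ext a
    simp only [Set.mem_setOf_eq]
    constructor
    · rintro h _ ⟨x, hxV, rfl⟩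
      have := h x hxV
      rw [hα] at this
      rw [dif_pos x.2] at this
      have : T ⟨(x : X), x.2⟩ (a (φ ⟨(x : X), x.2⟩)) = 0 := this
      have h0 : a (φ x) = 0 := hinj x (by rw [map_zero]; exact this)
      exact h0
    · intro h x hxV
      rw [hα]
      split_ifs with hxΔ
      · have : a (φ ⟨x, hxΔ⟩) = 0 := h _ ⟨⟨x, hxΔ⟩, hxV, rfl⟩
        rw [this, map_zero]
      · rfl
  refine ⟨h1, ?_, ?_⟩
  -- Part (2)
  · constructor
    · intro h
      by_contra hns
      obtain ⟨y, hyim, hyV⟩ := Set.not_subset.mp hns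
      obtain ⟨x, hxV, rfl⟩ := hyim
      obtain ⟨a, hay, haC⟩ := exists_bump (D := D) d hV hyV
      have : α a ∈ {a : C₀(X, D) | ∀ x ∈ V, α a x = 0} → _ := fun _ => trivial
      have hz : ∀ z ∈ V, α a z = 0 := h a haC
      have := hz (x : X) hxV
      rw [hα, dif_pos x.2] at this
      have h0 : a (φ ⟨(x : X), x.2⟩) = 0 := hinj _ (by rw [map_zero]; exact this)
      rw [show (⟨(x : X), x.2⟩ : Δ) = x from rfl] at h0
      exact hd (hay ▸ h0)
    · intro hsub a ha
      have : a ∈ {a : C₀(X, D) | ∀ x ∈ φ '' {x : Δ | (x : X) ∈ V}, a x = 0} := by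
        intro y hy
        exact ha y (hsub hy)
      rw [← h1] at this
      exact this
  -- Part (3)
  · intro Y hY hYr
    constructor
    · intro h
      by_contra hns
      obtain ⟨v, hvV, hvn⟩ := Set.not_subset.mp hns
      rw [Set.mem_union] at hvn
      push_neg at hvn
      obtain ⟨hvY, hvim⟩ := hvn
      have hCcl : IsClosed (Y ∪ φ '' {x : Δ | (x : X) ∈ V}) := hY.union himcl
      obtain ⟨a, hav, haC⟩ := exists_bump (D := D) d hCcl
        (by rw [Set.mem_union]; push_neg; exact ⟨hvY, hvim⟩)
      have haY : ∀ y ∈ Y, a y = 0 := fun y hy => haC y (Set.mem_union_left _ hy)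
      have haim : ∀ y ∈ φ '' {x : Δ | (x : X) ∈ V}, a y = 0 :=
        fun y hy => haC y (Set.mem_union_right _ hy)
      have haα : ∀ x ∈ V, α a x = 0 := by
        have : a ∈ {a : C₀(X, D) | ∀ x ∈ φ '' {x : Δ | (x : X) ∈ V}, a x = 0} := haim
        rw [← h1] at this
        exact this
      have := h a haY haα v hvV
      exact hd (hav ▸ this)
    · intro hsub a haY haα x hxV
      have haim : ∀ y ∈ φ '' {x : Δ | (x : X) ∈ V}, a y = 0 := by
        have : a ∈ {a : C₀(X, D) | ∀ x ∈ V, α a x = 0} := haα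
        rw [h1] at this
        exact this
      rcases hsub hxV with hx | hx
      · exact haY x hx
      · exact haim x hx
end

section
/- Let X be a locally compact Hausdorff space, Δ ⊆ X open, φ : Δ → X continuous and proper, D a nonzero C*-algebra, and for each x ∈ Δ let α_x : D → D be an injective *-homomorphism such that for every d ∈ D the map Δ ∋ x ↦ α_x(d) is continuous. Let α : C₀(X, D) → C₀(X, D) be the *-homomorphism determined by α(a)(x) = α_x(a(φ(x))) for x ∈ Δ and α(a)(x) = 0 for x ∉ Δ. Let Y ⊆ X be a closed set with X ∖ φ(Δ) ⊆ Y and put J := I_Y. Then for closed sets V, V' ⊆ X, the pair (I_V, I_{V'}) is a J-pair for (C₀(X, D), α) if and only if (V, V') is a Y-pair for (X, φ); that is: [α(I_V) ⊆ I_V, J ⊆ I_{V'}, and I_{V'} ∩ α⁻¹(I_V) = I_V] holds if and only if [φ(V ∩ Δ) ⊆ V, V' ⊆ Y, and V' ∪ φ(V ∩ Δ) = V]. -/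
open scoped ZeroAtInfty Classical

/-- Urysohn-type lemma: a C₀ function vanishing on a closed set, nonzero at a given point. -/
theorem aux_exists {X : Type*} [TopologicalSpace X] [LocallyCompactSpace X] [T2Space X]
    {D : Type*} [NonUnitalNormedRing D] [StarRing D] [CStarRing D]
    [NormedSpace ℂ D] [IsScalarTower ℂ D D] [SMulCommClass ℂ D D] [StarModule ℂ D]
    [CompleteSpace D]
    (d : D) {C : Set X} (hC : IsClosed C) {x : X} (hx : x ∉ C) :
    ∃ a : C₀(X, D), (∀ y ∈ C, a y = 0) ∧ a x = d := by
  obtain ⟨f, hf1, hf0, hfc, -⟩ := exists_continuous_one_zero_of_isCompact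
    (isCompact_singleton (x := x)) hC (Set.disjoint_singleton_left.mpr hx)
  set g : X → D := fun y => ((f y : ℂ)) • d with hg
  have hgc : Continuous g := (Complex.continuous_ofReal.comp f.continuous).smul continuous_const
  have hsupp : Function.support g ⊆ tsupport f := fun y hy => by
    apply subset_tsupport
    intro h0
    apply hy
    simp [hg, h0]
  have hgcs : HasCompactSupport g := HasCompactSupport.of_support_subset_isCompact hfc hsupp
  refine ⟨⟨⟨g, hgc⟩, ?_⟩, fun y hy => ?_, ?_⟩
  · exact hgcs.is_zero_at_infty
  · simp [hg, hf0 hy]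
  · simp [hg, hf1 (Set.mem_singleton x)]

/-- In the setting of a trivial bundle `C₀(X, D)` with induced
endomorphism `α` coming from `(φ, {α_x})` with all `α_x` injective, and `Y ⊆ X` closed with
`X ∖ φ(Δ) ⊆ Y`, `J = I_Y`: for closed `V, V' ⊆ X`, the pair `(I_V, I_{V'})` is a `J`-pair
for `(C₀(X, D), α)` iff `(V, V')` is a `Y`-pair for `(X, φ)`. -/
theorem stmt11 {X : Type*} [TopologicalSpace X] [LocallyCompactSpace X] [T2Space X]
    {D : Type*} [NonUnitalNormedRing D] [StarRing D] [CStarRing D]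
    [NormedSpace ℂ D] [IsScalarTower ℂ D D] [SMulCommClass ℂ D D] [StarModule ℂ D]
    [CompleteSpace D]
    (hD : ∃ d : D, d ≠ 0)
    (Δ : Set X) (hΔ : IsOpen Δ) (φ : Δ → X) (hφc : Continuous φ)
    (hφp : ∀ K : Set X, IsCompact K → IsCompact (φ ⁻¹' K))
    (T : Δ → (D →⋆ₙₐ[ℂ] D)) (hT : ∀ d : D, Continuous fun x : Δ => T x d)
    (hinj : ∀ x : Δ, Function.Injective (T x))
    (α : C₀(X, D) →⋆ₙₐ[ℂ] C₀(X, D))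
    (hα : ∀ (a : C₀(X, D)) (x : X),
      α a x = if h : x ∈ Δ then T ⟨x, h⟩ (a (φ ⟨x, h⟩)) else 0)
    (Y : Set X) (hY : IsClosed Y) (hYran : ∀ x : X, x ∉ Set.range φ → x ∈ Y)
    (V V' : Set X) (hV : IsClosed V) (hV' : IsClosed V') :
    -- `(I_V, I_{V'})` is a `J`-pair for `(C₀(X, D), α)` (with `J = I_Y`) ...
    ((∀ a : C₀(X, D), (∀ x ∈ V, a x = 0) → ∀ x ∈ V, α a x = 0) ∧
      (∀ a : C₀(X, D), (∀ y ∈ Y, a y = 0) → ∀ x ∈ V', a x = 0) ∧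
      {a : C₀(X, D) | (∀ x ∈ V', a x = 0) ∧ (∀ x ∈ V, α a x = 0)} =
        {a : C₀(X, D) | ∀ x ∈ V, a x = 0})
    ↔ -- ... iff `(V, V')` is a `Y`-pair for `(X, φ)`
    (φ '' {x : Δ | (x : X) ∈ V} ⊆ V ∧ V' ⊆ Y ∧
      V' ∪ φ '' {x : Δ | (x : X) ∈ V} = V) := by
  obtain ⟨d, hd⟩ := hD
  -- the image φ(V ∩ Δ) is closed
  have hproper : IsProperMap φ := isProperMap_iff_isCompact_preimage.mpr ⟨hφc, fun K hK => hφp K hK⟩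
  have himclosed : IsClosed (φ '' {x : Δ | (x : X) ∈ V}) :=
    hproper.isClosedMap _ (hV.preimage continuous_subtype_val)
  constructor
  · rintro ⟨h1, h2, h3⟩
    -- (i) φ(V ∩ Δ) ⊆ V
    have hi : φ '' {x : Δ | (x : X) ∈ V} ⊆ V := by
      rintro _ ⟨x, hxV, rfl⟩
      by_contra hφx
      obtain ⟨a, haV, hax⟩ := aux_exists d hV hφx
      have := h1 a haV x.1 hxV
      rw [hα] at this
      rw [dif_pos x.2] at this
      have : T x (a (φ x)) = 0 := by simpa using this
      rw [hax] at this
      exact hd (hinj x (by simpa using this))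
    refine ⟨hi, ?_, ?_⟩
    -- (ii) V' ⊆ Y
    · intro x hx
      by_contra hxY
      obtain ⟨a, haY, hax⟩ := aux_exists d hY hxY
      have := h2 a haY x hx
      rw [hax] at this; exact hd this
    -- (iii) V' ∪ φ(V ∩ Δ) = V
    · apply Set.Subset.antisymm
      · rintro x (hx | hx)
        · -- V' ⊆ V
          by_contra hxV
          obtain ⟨a, haV, hax⟩ := aux_exists d hV hxV
          have hmem : a ∈ {a : C₀(X, D) | (∀ x ∈ V', a x = 0) ∧ (∀ x ∈ V, α a x = 0)} :=
            h3 ▸ haV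
          have := hmem.1 x hx
          rw [hax] at this; exact hd this
        · exact hi hx
      · -- V ⊆ V' ∪ φ(V ∩ Δ)
        intro x hxV
        by_contra hx
        have hK : IsClosed (V' ∪ φ '' {x : Δ | (x : X) ∈ V}) := hV'.union himclosed
        obtain ⟨a, haK, hax⟩ := aux_exists d hK hx
        have hmem : a ∈ {a : C₀(X, D) | (∀ x ∈ V', a x = 0) ∧ (∀ x ∈ V, α a x = 0)} := by
          refine ⟨fun z hz => haK z (Or.inl hz), fun z hz => ?_⟩
          rw [hα]
          split_ifs with hzΔ
          · rw [haK _ (Or.inr ⟨⟨z, hzΔ⟩, hz, rfl⟩), map_zero]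
          · rfl
        have : a ∈ {a : C₀(X, D) | ∀ x ∈ V, a x = 0} := h3 ▸ hmem
        have := this x hxV
        rw [hax] at this; exact hd this
  · rintro ⟨hi, hii, hiii⟩
    have hV'V : V' ⊆ V := hiii ▸ Set.subset_union_left
    have halpha : ∀ a : C₀(X, D), (∀ x ∈ V, a x = 0) → ∀ x ∈ V, α a x = 0 := by
      intro a ha x hx
      rw [hα]
      split_ifs with hxΔ
      · rw [ha _ (hi ⟨⟨x, hxΔ⟩, hx, rfl⟩), map_zero]
      · rfl
    refine ⟨halpha, fun a ha x hx => ha x (hii hx), ?_⟩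
    apply Set.Subset.antisymm
    · rintro a ⟨haV', haα⟩ z hzV
      rw [← hiii] at hzV
      rcases hzV with hz | ⟨w, hwV, rfl⟩
      · exact haV' z hz
      · have := haα w.1 hwV
        rw [hα, dif_pos w.2] at this
        have : T w (a (φ w)) = 0 := by simpa using this
        exact hinj w (show T w (a (φ w)) = T w 0 by simpa using this)
    · intro a ha
      exact ⟨fun x hx => ha x (hV'V hx), halpha a ha⟩
end

section
/- Let (X, φ) be a partial dynamical system (X locally compact Hausdorff, Δ ⊆ X open, φ : Δ → X continuous proper) and let Y ⊆ X be a closed set with X ∖ φ(Δ) ⊆ Y. Consider the reversible Y-extension (X̃, φ̃) with domain Δ̃ = {x̂ ∈ X̃ : x₀ ∈ Δ}. Then: (1) Δ̃ is open in X̃; (2) φ̃ maps Δ̃ bijectively onto φ̃(Δ̃) = {x̂ ∈ X̃ : x₁ ≠ 0}, which is a clopen subset of X̃; (3) φ̃ : Δ̃ → φ̃(Δ̃) is a homeomorphism. In other words, (X̃, φ̃) is a reversible partial dynamical system. -/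
/-! Reversible `Y`-extension of a partial dynamical system `(X, φ)`.
The ambient space is `ℕ → X ⊕ Unit`, with `Sum.inr ()` playing the role of the isolated
point `0` of the disjoint union `X ⊔ {0}`, and the product topology. -/

/-- The set `X_N` of finite chains `(x₀, …, x_N, 0, 0, …)` with `x_n ∈ Δ`,
`φ(x_n) = x_{n-1}` for `1 ≤ n ≤ N`, and `x_N ∈ Y`. -/
def XFin {X : Type*} (Δ : Set X) (φ : Δ → X) (Y : Set X) (N : ℕ) :
    Set (ℕ → X ⊕ Unit) :=
  {f | ∃ x : ℕ → X, (∀ n ≤ N, f n = Sum.inl (x n)) ∧ (∀ n, N < n → f n = Sum.inr ()) ∧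
        (∀ n, 1 ≤ n → n ≤ N → ∃ h : x n ∈ Δ, φ ⟨x n, h⟩ = x (n - 1)) ∧ x N ∈ Y}

/-- The set `X_∞` of infinite chains `(x₀, x₁, …)` with `x_n ∈ Δ`, `φ(x_n) = x_{n-1}`. -/
def XInfSet {X : Type*} (Δ : Set X) (φ : Δ → X) : Set (ℕ → X ⊕ Unit) :=
  {f | ∃ x : ℕ → X, (∀ n, f n = Sum.inl (x n)) ∧
        ∀ n, 1 ≤ n → ∃ h : x n ∈ Δ, φ ⟨x n, h⟩ = x (n - 1)}

/-- The space `X̃ = (⋃ N, X_N) ∪ X_∞` of the reversible `Y`-extension, carrying the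
subspace topology of the product topology. -/
def XExt {X : Type*} (Δ : Set X) (φ : Δ → X) (Y : Set X) : Set (ℕ → X ⊕ Unit) :=
  (⋃ N, XFin Δ φ Y N) ∪ XInfSet Δ φ

open Classical in
/-- The ambient extension of the map `φ̃(x₀, x₁, …) = (φ(x₀), x₀, x₁, …)`. -/
noncomputable def phiT {X : Type*} (Δ : Set X) (φ : Δ → X) (f : ℕ → X ⊕ Unit) :
    ℕ → X ⊕ Unit :=
  fun n =>
    match n with
    | 0 =>
      match f 0 with
      | Sum.inl x => if h : x ∈ Δ then Sum.inl (φ ⟨x, h⟩) else Sum.inr ()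
      | Sum.inr _ => Sum.inr ()
    | Nat.succ m => f m

section Aux
variable {X : Type*} {Δ : Set X} {φ : Δ → X} {Y : Set X}

lemma phiT_zero {f : ℕ → X ⊕ Unit} {x : X} (h0 : f 0 = Sum.inl x) (hx : x ∈ Δ) :
    phiT Δ φ f 0 = Sum.inl (φ ⟨x, hx⟩) := by
  simp only [phiT, h0, dif_pos hx]

lemma phiT_succ (f : ℕ → X ⊕ Unit) (n : ℕ) : phiT Δ φ f (n + 1) = f n := rfl

lemma phiT_mem {f : ℕ → X ⊕ Unit} (hf : f ∈ XExt Δ φ Y) {x : X} (hx : x ∈ Δ)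
    (h0 : f 0 = Sum.inl x) : phiT Δ φ f ∈ XExt Δ φ Y := by
  rcases hf with hfin | hinf
  · obtain ⟨N, xs, hle, hgt, hchain, hYm⟩ := Set.mem_iUnion.1 hfin
    have hx0 : xs 0 = x := by
      have h := hle 0 (Nat.zero_le N)
      rw [h0] at h
      exact Sum.inl.inj h.symm
    subst hx0
    refine Or.inl (Set.mem_iUnion.2 ⟨N + 1,
      fun n => Nat.casesOn n (φ ⟨xs 0, hx⟩) xs, ?_, ?_, ?_, hYm⟩)
    · intro n hn
      cases n with
      | zero => exact phiT_zero h0 hx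
      | succ m => exact hle m (by omega)
    · intro n hn
      cases n with
      | zero => omega
      | succ m => exact hgt m (by omega)
    · intro n h1 h2
      cases n with
      | zero => omega
      | succ m =>
        cases m with
        | zero => exact ⟨hx, rfl⟩
        | succ k =>
          obtain ⟨h, e⟩ := hchain (k + 1) (by omega) (by omega)
          exact ⟨h, by simpa using e⟩
  · obtain ⟨xs, hle, hchain⟩ := hinf
    have hx0 : xs 0 = x := by
      have h := hle 0
      rw [h0] at h
      exact Sum.inl.inj h.symm
    subst hx0
    refine Or.inr ⟨fun n => Nat.casesOn n (φ ⟨xs 0, hx⟩) xs, ?_, ?_⟩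
    · intro n
      cases n with
      | zero => exact phiT_zero h0 hx
      | succ m => exact hle m
    · intro n h1
      cases n with
      | zero => omega
      | succ m =>
        cases m with
        | zero => exact ⟨hx, rfl⟩
        | succ k =>
          obtain ⟨h, e⟩ := hchain (k + 1) (by omega)
          exact ⟨h, by simpa using e⟩

lemma shift_spec {g : ℕ → X ⊕ Unit} (hg : g ∈ XExt Δ φ Y)
    (h1 : g 1 ≠ Sum.inr ()) :
    (fun n => g (n + 1)) ∈ XExt Δ φ Y ∧ (∃ x ∈ Δ, g 1 = Sum.inl x) ∧
      phiT Δ φ (fun n => g (n + 1)) = g := by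
  rcases hg with hfin | hinf
  · obtain ⟨N, xs, hle, hgt, hchain, hYm⟩ := Set.mem_iUnion.1 hfin
    cases N with
    | zero => exact absurd (hgt 1 (by omega)) h1
    | succ M =>
      obtain ⟨hx1, e1⟩ := hchain 1 le_rfl (by omega)
      have hg1 : g 1 = Sum.inl (xs 1) := hle 1 (by omega)
      refine ⟨Or.inl (Set.mem_iUnion.2 ⟨M, fun n => xs (n + 1), ?_, ?_, ?_, hYm⟩),
        ⟨xs 1, hx1, hg1⟩, ?_⟩
      · intro n hn; exact hle (n + 1) (by omega)
      · intro n hn; exact hgt (n + 1) (by omega)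
      · intro n hn1 hn2
        obtain ⟨h, e⟩ := hchain (n + 1) (by omega) (by omega)
        refine ⟨h, ?_⟩
        rw [e]; congr 1; omega
      · funext n
        cases n with
        | zero =>
          have : (fun n => g (n + 1)) 0 = Sum.inl (xs 1) := hg1
          rw [phiT_zero this hx1, e1]
          simpa using (hle 0 (by omega)).symm
        | succ m => rfl
  · obtain ⟨xs, hle, hchain⟩ := hinf
    obtain ⟨hx1, e1⟩ := hchain 1 le_rfl
    have hg1 : g 1 = Sum.inl (xs 1) := hle 1
    refine ⟨Or.inr ⟨fun n => xs (n + 1), fun n => hle (n + 1), ?_⟩,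
      ⟨xs 1, hx1, hg1⟩, ?_⟩
    · intro n hn1
      obtain ⟨h, e⟩ := hchain (n + 1) (by omega)
      refine ⟨h, ?_⟩
      rw [e]; congr 1; omega
    · funext n
      cases n with
      | zero =>
        have : (fun n => g (n + 1)) 0 = Sum.inl (xs 1) := hg1
        rw [phiT_zero this hx1, e1]
        simpa using (hle 0).symm
      | succ m => rfl

end Aux

/-- The reversible `Y`-extension `(X̃, φ̃)` of a partial dynamical system
`(X, φ)` is a reversible partial dynamical system: the domain
`Δ̃ = {x̂ : x₀ ∈ Δ}` is open, `φ̃` maps `Δ̃` bijectively onto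
`φ̃(Δ̃) = {x̂ : x₁ ≠ 0}`, which is clopen, and `φ̃ : Δ̃ → φ̃(Δ̃)` is a homeomorphism. -/
theorem stmt12 {X : Type*} [TopologicalSpace X] [LocallyCompactSpace X] [T2Space X]
    (Δ : Set X) (hΔ : IsOpen Δ) (φ : Δ → X) (hφc : Continuous φ)
    (hφp : ∀ K : Set X, IsCompact K → IsCompact (φ ⁻¹' K))
    (Y : Set X) (hYc : IsClosed Y) (hY : ∀ x : X, x ∉ Set.range φ → x ∈ Y) :
    -- `φ̃` maps `Δ̃` into `X̃`
    (∀ f : XExt Δ φ Y, (∃ x ∈ Δ, (f : ℕ → X ⊕ Unit) 0 = Sum.inl x) →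
        phiT Δ φ (f : ℕ → X ⊕ Unit) ∈ XExt Δ φ Y) ∧
    -- (1) `Δ̃` is open in `X̃`
    IsOpen {f : XExt Δ φ Y | ∃ x ∈ Δ, (f : ℕ → X ⊕ Unit) 0 = Sum.inl x} ∧
    -- (2) `φ̃` is injective on `Δ̃` ...
    (∀ f g : XExt Δ φ Y,
        (∃ x ∈ Δ, (f : ℕ → X ⊕ Unit) 0 = Sum.inl x) →
        (∃ x ∈ Δ, (g : ℕ → X ⊕ Unit) 0 = Sum.inl x) →
        phiT Δ φ (f : ℕ → X ⊕ Unit) = phiT Δ φ (g : ℕ → X ⊕ Unit) → f = g) ∧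
    -- ... its image is `{x̂ ∈ X̃ : x₁ ≠ 0}` ...
    ({g : XExt Δ φ Y | ∃ f : XExt Δ φ Y,
        (∃ x ∈ Δ, (f : ℕ → X ⊕ Unit) 0 = Sum.inl x) ∧
        phiT Δ φ (f : ℕ → X ⊕ Unit) = (g : ℕ → X ⊕ Unit)} =
      {g : XExt Δ φ Y | (g : ℕ → X ⊕ Unit) 1 ≠ Sum.inr ()}) ∧
    -- ... which is clopen in `X̃`
    IsClopen {g : XExt Δ φ Y | (g : ℕ → X ⊕ Unit) 1 ≠ Sum.inr ()} ∧
    -- (3) `φ̃ : Δ̃ → φ̃(Δ̃)` is a homeomorphism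
    (∃ e : {f : XExt Δ φ Y // ∃ x ∈ Δ, (f : ℕ → X ⊕ Unit) 0 = Sum.inl x} ≃ₜ
          {g : XExt Δ φ Y // (g : ℕ → X ⊕ Unit) 1 ≠ Sum.inr ()},
      ∀ f, ((e f : XExt Δ φ Y) : ℕ → X ⊕ Unit) =
        phiT Δ φ ((f : XExt Δ φ Y) : ℕ → X ⊕ Unit)):= by
  have part0 : ∀ f : XExt Δ φ Y, (∃ x ∈ Δ, (f : ℕ → X ⊕ Unit) 0 = Sum.inl x) →
      phiT Δ φ (f : ℕ → X ⊕ Unit) ∈ XExt Δ φ Y := by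
    rintro f ⟨x, hx, h0⟩
    exact phiT_mem f.2 hx h0
  have part1 : IsOpen {f : XExt Δ φ Y | ∃ x ∈ Δ, (f : ℕ → X ⊕ Unit) 0 = Sum.inl x} := by
    have hset : {f : XExt Δ φ Y | ∃ x ∈ Δ, (f : ℕ → X ⊕ Unit) 0 = Sum.inl x}
        = (fun f : XExt Δ φ Y => (f : ℕ → X ⊕ Unit) 0) ⁻¹' (Sum.inl '' Δ) := by
      ext f
      constructor
      · rintro ⟨x, hx, h0⟩; exact ⟨x, hx, h0.symm⟩
      · rintro ⟨x, hx, h0⟩; exact ⟨x, hx, h0.symm⟩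
    rw [hset]
    exact ((Topology.IsOpenEmbedding.inl (Y := Unit)).isOpenMap _ hΔ).preimage
      ((continuous_apply 0).comp continuous_subtype_val)
  have part2 : ∀ f g : XExt Δ φ Y,
      (∃ x ∈ Δ, (f : ℕ → X ⊕ Unit) 0 = Sum.inl x) →
      (∃ x ∈ Δ, (g : ℕ → X ⊕ Unit) 0 = Sum.inl x) →
      phiT Δ φ (f : ℕ → X ⊕ Unit) = phiT Δ φ (g : ℕ → X ⊕ Unit) → f = g := by
    intro f g _ _ h
    exact Subtype.ext (funext fun n => congrFun h (n + 1))
  have part3 : {g : XExt Δ φ Y | ∃ f : XExt Δ φ Y,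
        (∃ x ∈ Δ, (f : ℕ → X ⊕ Unit) 0 = Sum.inl x) ∧
        phiT Δ φ (f : ℕ → X ⊕ Unit) = (g : ℕ → X ⊕ Unit)} =
      {g : XExt Δ φ Y | (g : ℕ → X ⊕ Unit) 1 ≠ Sum.inr ()} := by
    ext g
    simp only [Set.mem_setOf_eq]
    constructor
    · rintro ⟨f, ⟨x, hx, h0⟩, hfg⟩
      rw [← hfg, phiT_succ, h0]
      simp
    · intro hg
      obtain ⟨hmem, ⟨x, hx, hg1⟩, heq⟩ := shift_spec g.2 hg
      exact ⟨⟨_, hmem⟩, ⟨x, hx, hg1⟩, heq⟩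
  have hclopen : IsClopen ({Sum.inr ()} : Set (X ⊕ Unit)) := by
    have : ({Sum.inr ()} : Set (X ⊕ Unit)) = Set.range Sum.inr := by
      ext s
      constructor
      · rintro rfl; exact ⟨(), rfl⟩
      · rintro ⟨u, rfl⟩; rfl
    rw [this]
    exact ⟨isClosed_range_inr, Topology.IsOpenEmbedding.inr.isOpen_range⟩
  have part4 : IsClopen {g : XExt Δ φ Y | (g : ℕ → X ⊕ Unit) 1 ≠ Sum.inr ()} := by
    have hset : {g : XExt Δ φ Y | (g : ℕ → X ⊕ Unit) 1 ≠ Sum.inr ()}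
        = (fun g : XExt Δ φ Y => (g : ℕ → X ⊕ Unit) 1) ⁻¹' ({Sum.inr ()}ᶜ) := rfl
    rw [hset]
    exact hclopen.compl.preimage ((continuous_apply 1).comp continuous_subtype_val)
  refine ⟨part0, part1, part2, part3, part4, ?_⟩
  let F : {f : XExt Δ φ Y // ∃ x ∈ Δ, (f : ℕ → X ⊕ Unit) 0 = Sum.inl x} →
      {g : XExt Δ φ Y // (g : ℕ → X ⊕ Unit) 1 ≠ Sum.inr ()} := fun f =>
    ⟨⟨phiT Δ φ (f.1 : ℕ → X ⊕ Unit), part0 f.1 f.2⟩, by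
      obtain ⟨x, hx, h0⟩ := f.2
      show phiT Δ φ (f.1 : ℕ → X ⊕ Unit) 1 ≠ Sum.inr ()
      rw [phiT_succ, h0]
      simp⟩
  let B : {g : XExt Δ φ Y // (g : ℕ → X ⊕ Unit) 1 ≠ Sum.inr ()} →
      {f : XExt Δ φ Y // ∃ x ∈ Δ, (f : ℕ → X ⊕ Unit) 0 = Sum.inl x} := fun g =>
    ⟨⟨fun n => (g.1 : ℕ → X ⊕ Unit) (n + 1), (shift_spec g.1.2 g.2).1⟩,
      (shift_spec g.1.2 g.2).2.1⟩
  let v : {f : XExt Δ φ Y // ∃ x ∈ Δ, (f : ℕ → X ⊕ Unit) 0 = Sum.inl x} →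
      (Sum.inl '' Δ : Set (X ⊕ Unit)) := fun f =>
    ⟨(f.1 : ℕ → X ⊕ Unit) 0, by obtain ⟨x, hx, h0⟩ := f.2; exact ⟨x, hx, h0.symm⟩⟩
  let w : (Sum.inl '' Δ : Set (X ⊕ Unit)) → Δ := fun s => ⟨s.2.choose, s.2.choose_spec.1⟩
  have hwv : ∀ s : (Sum.inl '' Δ : Set (X ⊕ Unit)), Sum.inl (w s : X) = (s : X ⊕ Unit) :=
    fun s => s.2.choose_spec.2
  have hw : Continuous w := by
    have hemb : Topology.IsEmbedding (fun d : Δ => (Sum.inl (d : X) : X ⊕ Unit)) :=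
      Topology.IsEmbedding.inl.comp Topology.IsEmbedding.subtypeVal
    rw [hemb.continuous_iff]
    have : (fun d : Δ => (Sum.inl (d : X) : X ⊕ Unit)) ∘ w
        = (Subtype.val : (Sum.inl '' Δ : Set (X ⊕ Unit)) → X ⊕ Unit) :=
      funext fun s => hwv s
    rw [this]
    exact continuous_subtype_val
  have hv : Continuous v :=
    Continuous.subtype_mk
      ((continuous_apply 0).comp (continuous_subtype_val.comp continuous_subtype_val)) _
  have hF : Continuous F := by
    apply Continuous.subtype_mk
    apply Continuous.subtype_mk
    apply continuous_pi
    intro n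
    cases n with
    | succ m =>
      exact (continuous_apply m).comp (continuous_subtype_val.comp continuous_subtype_val)
    | zero =>
      have key : (fun f : {f : XExt Δ φ Y // ∃ x ∈ Δ, (f : ℕ → X ⊕ Unit) 0 = Sum.inl x} =>
          phiT Δ φ (f.1 : ℕ → X ⊕ Unit) 0) = fun f => Sum.inl (φ (w (v f))) := by
        funext f
        obtain ⟨x, hx, h0⟩ := f.2
        rw [phiT_zero h0 hx]
        congr 1
        have h2 : (v f : X ⊕ Unit) = Sum.inl x := h0
        have h3 : w (v f) = ⟨x, hx⟩ := by
          apply Subtype.ext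
          have := hwv (v f)
          rw [h2] at this
          exact Sum.inl.inj this
        rw [h3]
      exact key ▸ continuous_inl.comp (hφc.comp (hw.comp hv))
  have hB : Continuous B := by
    apply Continuous.subtype_mk
    apply Continuous.subtype_mk
    exact continuous_pi fun n =>
      (continuous_apply (n + 1)).comp (continuous_subtype_val.comp continuous_subtype_val)
  refine ⟨⟨⟨F, B, fun f => ?_, fun g => ?_⟩, hF, hB⟩, fun f => rfl⟩
  · exact Subtype.ext (Subtype.ext (funext fun n => rfl))
  · exact Subtype.ext (Subtype.ext ((shift_spec g.1.2 g.2).2.2))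
end

section
/- Let (X, φ) be a partial dynamical system (X locally compact Hausdorff, Δ ⊆ X open, φ : Δ → X continuous proper) and Y ⊆ X a closed set with X ∖ φ(Δ) ⊆ Y, and let (X̃, φ̃) be the reversible Y-extension with domain Δ̃. Then the map Φ : X̃ → X defined by Φ(x̂) = x₀ (the zeroth coordinate) is continuous and surjective, and it intertwines φ̃ and φ: Φ(φ̃(x̂)) = φ(Φ(x̂)) for every x̂ ∈ Δ̃. -/
/-- The map `Φ : X̃ → X`, `Φ(x̂) = x₀`, is continuous and surjective, and
intertwines `φ̃` and `φ`: `Φ(φ̃(x̂)) = φ(Φ(x̂))` for all `x̂ ∈ Δ̃`. -/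
theorem stmt13 {X : Type*} [TopologicalSpace X] [LocallyCompactSpace X] [T2Space X]
    (Δ : Set X) (hΔ : IsOpen Δ) (φ : Δ → X) (hφc : Continuous φ)
    (hφp : ∀ K : Set X, IsCompact K → IsCompact (φ ⁻¹' K))
    (Y : Set X) (hYc : IsClosed Y) (hY : ∀ x : X, x ∉ Set.range φ → x ∈ Y) :
    -- `φ̃` maps `Δ̃` into `X̃` (so that the intertwining relation below makes sense)
    (∀ f : XExt Δ φ Y, (∃ x ∈ Δ, (f : ℕ → X ⊕ Unit) 0 = Sum.inl x) →
        phiT Δ φ (f : ℕ → X ⊕ Unit) ∈ XExt Δ φ Y) ∧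
    ∃ Φ : XExt Δ φ Y → X,
      Continuous Φ ∧ Function.Surjective Φ ∧
      -- `Φ` extracts the zeroth coordinate
      (∀ f : XExt Δ φ Y, (f : ℕ → X ⊕ Unit) 0 = Sum.inl (Φ f)) ∧
      -- `Φ ∘ φ̃ = φ ∘ Φ` on `Δ̃`
      (∀ (f : XExt Δ φ Y) (x : X) (hx : x ∈ Δ),
        (f : ℕ → X ⊕ Unit) 0 = Sum.inl x →
        ∀ hmem : phiT Δ φ (f : ℕ → X ⊕ Unit) ∈ XExt Δ φ Y,
          Φ ⟨phiT Δ φ (f : ℕ → X ⊕ Unit), hmem⟩ = φ ⟨x, hx⟩) := by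

  classical
  have memzero : ∀ f ∈ XExt Δ φ Y, ∃ x : X, f 0 = Sum.inl x := by
    rintro f (hf | hf)
    · obtain ⟨N, hN⟩ := Set.mem_iUnion.1 hf
      obtain ⟨c, h1, -, -, -⟩ := hN
      exact ⟨c 0, h1 0 (Nat.zero_le N)⟩
    · obtain ⟨c, h1, -⟩ := hf
      exact ⟨c 0, h1 0⟩
  have closure : ∀ f : XExt Δ φ Y, (∃ x ∈ Δ, (f : ℕ → X ⊕ Unit) 0 = Sum.inl x) →
      phiT Δ φ (f : ℕ → X ⊕ Unit) ∈ XExt Δ φ Y := by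
    rintro ⟨f, hf⟩ ⟨x, hx, hf0⟩
    simp only [Subtype.coe_mk] at hf0 ⊢
    have hphi0 : phiT Δ φ f 0 = Sum.inl (φ ⟨x, hx⟩) := by
      simp only [phiT, hf0, dif_pos hx]
    rcases hf with hf | hf
    · obtain ⟨N, hN⟩ := Set.mem_iUnion.1 hf
      obtain ⟨c, h1, h2, h3, h4⟩ := hN
      have hc0 : c 0 = x := by
        have h := h1 0 (Nat.zero_le N)
        rw [hf0] at h
        exact Sum.inl.inj h.symm
      refine Or.inl (Set.mem_iUnion.2 ⟨N + 1, ?_⟩)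
      refine ⟨fun n => Nat.casesOn n (φ ⟨x, hx⟩) (fun m => c m), ?_, ?_, ?_, h4⟩
      · intro n hn
        cases n with
        | zero => exact hphi0
        | succ m => exact h1 m (Nat.succ_le_succ_iff.mp hn)
      · intro n hn
        cases n with
        | zero => omega
        | succ m => exact h2 m (by omega)
      · intro n h1n hnN
        cases n with
        | zero => omega
        | succ m =>
          cases m with
          | zero =>
            refine ⟨show c 0 ∈ Δ by rw [hc0]; exact hx, ?_⟩
            show φ ⟨c 0, _⟩ = φ ⟨x, hx⟩
            exact congrArg φ (Subtype.ext hc0)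
          | succ k =>
            exact h3 (k + 1) (by omega) (by omega)
    · obtain ⟨c, h1, h3⟩ := hf
      have hc0 : c 0 = x := by
        have h := h1 0
        rw [hf0] at h
        exact Sum.inl.inj h.symm
      refine Or.inr ⟨fun n => Nat.casesOn n (φ ⟨x, hx⟩) (fun m => c m), ?_, ?_⟩
      · intro n
        cases n with
        | zero => exact hphi0
        | succ m => exact h1 m
      · intro n h1n
        cases n with
        | zero => omega
        | succ m =>
          cases m with
          | zero =>
            refine ⟨show c 0 ∈ Δ by rw [hc0]; exact hx, ?_⟩
            show φ ⟨c 0, _⟩ = φ ⟨x, hx⟩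
            exact congrArg φ (Subtype.ext hc0)
          | succ k =>
            exact h3 (k + 1) (by omega)
  refine ⟨closure, ?_⟩
  set Φ : XExt Δ φ Y → X := fun f => (memzero f f.2).choose with hΦdef
  have hΦ : ∀ f : XExt Δ φ Y, (f : ℕ → X ⊕ Unit) 0 = Sum.inl (Φ f) :=
    fun f => (memzero f f.2).choose_spec
  refine ⟨Φ, ?_, ?_, hΦ, ?_⟩
  · -- continuity
    rw [(Topology.IsEmbedding.inl : Topology.IsEmbedding (Sum.inl : X → X ⊕ Unit)).continuous_iff]
    have heq : (Sum.inl ∘ Φ : XExt Δ φ Y → X ⊕ Unit)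
        = fun f : XExt Δ φ Y => (f : ℕ → X ⊕ Unit) 0 := funext fun f => (hΦ f).symm
    rw [heq]
    exact (continuous_apply 0).comp continuous_subtype_val
  · -- surjectivity
    intro x
    have key : ∀ z : X, ∃ y : X, z ∉ Y → ∃ h : y ∈ Δ, φ ⟨y, h⟩ = z := by
      intro z
      by_cases hz : z ∉ Y
      · have hr : z ∈ Set.range φ := by
          by_contra h
          exact hz (hY z h)
        obtain ⟨⟨y, hy⟩, hyx⟩ := hr
        exact ⟨y, fun _ => ⟨hy, hyx⟩⟩
      · exact ⟨z, fun h => absurd h hz⟩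
    choose g hg using key
    set s : ℕ → X := fun n => Nat.rec x (fun _ ih => g ih) n with hsdef
    have hs0 : s 0 = x := rfl
    have hssucc : ∀ n, s (n + 1) = g (s n) := fun n => rfl
    by_cases hfin : ∃ n, s n ∈ Y
    · set N := Nat.find hfin with hNdef
      have hNY : s N ∈ Y := Nat.find_spec hfin
      have hNmin : ∀ m < N, s m ∉ Y := fun m hm => Nat.find_min hfin hm
      set f : ℕ → X ⊕ Unit := fun n => if n ≤ N then Sum.inl (s n) else Sum.inr () with hfdef
      have hfmem : f ∈ XExt Δ φ Y := by
        refine Or.inl (Set.mem_iUnion.2 ⟨N, s, ?_, ?_, ?_, hNY⟩)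
        · intro n hn; simp [hfdef, hn]
        · intro n hn; simp [hfdef, Nat.not_le.mpr hn]
        · intro n h1n hnN
          obtain ⟨m, rfl⟩ : ∃ m, n = m + 1 := ⟨n - 1, by omega⟩
          have hmY : s m ∉ Y := hNmin m (by omega)
          exact hg (s m) hmY
      refine ⟨⟨f, hfmem⟩, ?_⟩
      have h0 : f 0 = Sum.inl (Φ ⟨f, hfmem⟩) := hΦ ⟨f, hfmem⟩
      have hf0 : f 0 = Sum.inl x := by simp [hfdef, hs0]
      rw [hf0] at h0
      exact (Sum.inl.inj h0).symm
    · push_neg at hfin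
      set f : ℕ → X ⊕ Unit := fun n => Sum.inl (s n) with hfdef
      have hfmem : f ∈ XExt Δ φ Y := by
        refine Or.inr ⟨s, fun n => rfl, ?_⟩
        intro n h1n
        obtain ⟨m, rfl⟩ : ∃ m, n = m + 1 := ⟨n - 1, by omega⟩
        exact hg (s m) (hfin m)
      refine ⟨⟨f, hfmem⟩, ?_⟩
      have h0 : f 0 = Sum.inl (Φ ⟨f, hfmem⟩) := hΦ ⟨f, hfmem⟩
      have hf0 : f 0 = Sum.inl x := rfl
      rw [hf0] at h0
      exact (Sum.inl.inj h0).symm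
  · -- intertwining
    intro f x hx hf0 hmem
    have h1 : phiT Δ φ (f : ℕ → X ⊕ Unit) 0
        = Sum.inl (Φ ⟨phiT Δ φ (f : ℕ → X ⊕ Unit), hmem⟩) :=
      hΦ ⟨phiT Δ φ (f : ℕ → X ⊕ Unit), hmem⟩
    have h2 : phiT Δ φ (f : ℕ → X ⊕ Unit) 0 = Sum.inl (φ ⟨x, hx⟩) := by
      simp only [phiT, hf0, dif_pos hx]
    rw [h2] at h1
    exact (Sum.inl.inj h1).symm
end

section
/- Let (X, φ) be a partial dynamical system (X locally compact Hausdorff, Δ ⊆ X open, φ : Δ → X continuous proper) and Y ⊆ X a closed set with X ∖ φ(Δ) ⊆ Y, and let (X̃, φ̃) be the reversible Y-extension. Then φ̃ is topologically free (for every n ≥ 1, the set of x̂ in the domain of φ̃ⁿ with φ̃ⁿ(x̂) = x̂ has empty interior in X̃) if and only if φ is topologically free outside Y, i.e. the set of points x ∈ X such that for some n ≥ 1 the iterate φⁿ is defined at x with φⁿ(x) = x, the orbit O(x) = {x, φ(x), …, φ^{n−1}(x)} satisfies O(x) ∩ Y = ∅, and O(x) has no entrance (there is no y ∈ Δ with y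 ∉ O(x) and φ(y) ∈ O(x)), has empty interior in X. -/
/-!
Finite chains in `X̃` end in the isolated point `0`, so the `φ̃`-periodic points are exactly the
periodic backward orbits `(x₀, x₁, …) ∈ X_∞`.

If the entranceless cycles off `Y` have nonempty interior, Baire's theorem in the locally compact
Hausdorff space `X` gives a nonempty open `V` of such points on which `φⁿ = id` for a single `n`.
A point of `X̃` with head in `V` can only run backwards inside the cycle of its head (there is no
entrance), so it never reaches `Y` and is a periodic backward orbit: the open set of these points
consists of `φ̃`-periodic points.

Conversely, let an open set of `φ̃`-periodic points contain a periodic backward orbit `(yⱼ)`;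
it contains every point of `X̃` whose coordinates `0, …, m` are close to those of `(yⱼ)`. Put
`p = m + 2n`. For `w` near `y_p` the chain `φ^{p-j}(w)`, `j ≤ p`, has such coordinates, so every
point of `X̃` extending it is periodic. Extending it through preimages, which exist off `Y`, shows
`φⁿ(w) = w`; cutting it at a point of the orbit in `Y` would give a periodic finite chain; and
extending it through an entrance `v` puts `v` back into the orbit by periodicity.
-/

open Function Set Filter Topology

lemma exists_isOpen_subset_isPeriodicPt {Z : Type*} [TopologicalSpace Z] [LocallyCompactSpace Z]
    [T2Space Z] {f : Z → Z} {U : Set Z} (hU : IsOpen U) (hne : U.Nonempty)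
    (hf : ∀ k, ContinuousOn f^[k] U) (hper : ∀ x ∈ U, ∃ n, 1 ≤ n ∧ IsPeriodicPt f n x) :
    ∃ n, 1 ≤ n ∧ ∃ V, IsOpen V ∧ V.Nonempty ∧ V ⊆ U ∧ ∀ x ∈ V, IsPeriodicPt f n x := by
  have : Nonempty U := hne.to_subtype
  have : LocallyCompactSpace U := hU.locallyCompactSpace
  let T : ℕ → Set U := fun k => {a | IsPeriodicPt f (k + 1) a}
  have hT : ∀ k, IsClosed (T k) := fun k =>
    isClosed_eq (hf (k + 1)).domRestrict continuous_subtype_val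
  have hcover : ⋃ k, T k = univ := eq_univ_of_forall fun a => by
    obtain ⟨n, hn, ha⟩ := hper a a.2
    exact mem_iUnion.2 ⟨n - 1, by simpa [T, Nat.sub_add_cancel hn] using ha⟩
  obtain ⟨k, hk⟩ := nonempty_interior_of_iUnion_of_closed hT hcover
  refine ⟨k + 1, le_add_self, (↑) '' interior (T k), hU.isOpenMap_subtype_val _ isOpen_interior,
    hk.image _, fun _ ⟨a, _, ha⟩ => ha ▸ a.2, ?_⟩
  rintro _ ⟨a, ha, rfl⟩
  exact interior_subset (s := T k) ha

section PartialDynamics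

variable {X : Type*} {Δ : Set X} {φ : Δ → X} {Y : Set X}

open Classical in
/-- `φ`, extended by the identity off `Δ` so that its iterates are total functions. -/
noncomputable def phiTot (Δ : Set X) (φ : Δ → X) : X → X :=
  fun x => if h : x ∈ Δ then φ ⟨x, h⟩ else x

lemma phiTot_of_mem {x : X} (h : x ∈ Δ) : phiTot Δ φ x = φ ⟨x, h⟩ := dif_pos h

def IsChainUpTo (Δ : Set X) (φ : Δ → X) (x : ℕ → X) (N : ℕ) : Prop :=
  ∀ j < N, x (j + 1) ∈ Δ ∧ phiTot Δ φ (x (j + 1)) = x j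

def IsBackwardOrbit (Δ : Set X) (φ : Δ → X) (x : ℕ → X) : Prop :=
  ∀ j, x (j + 1) ∈ Δ ∧ phiTot Δ φ (x (j + 1)) = x j

lemma IsBackwardOrbit.isChainUpTo {x : ℕ → X} (hx : IsBackwardOrbit Δ φ x) (N : ℕ) :
    IsChainUpTo Δ φ x N :=
  fun j _ => hx j

lemma IsChainUpTo.mono {x : ℕ → X} {N M : ℕ} (hx : IsChainUpTo Δ φ x N) (h : M ≤ N) :
    IsChainUpTo Δ φ x M :=
  fun j hj => hx j (by omega)

lemma IsChainUpTo.iterate_sub_apply {x : ℕ → X} {N j k : ℕ} (hx : IsChainUpTo Δ φ x N)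
    (hjk : j ≤ k) (hkN : k ≤ N) : (phiTot Δ φ)^[k - j] (x k) = x j := by
  obtain ⟨s, rfl⟩ := Nat.exists_eq_add_of_le hjk
  rw [Nat.add_sub_cancel_left]
  induction s with
  | zero => rfl
  | succ s ih =>
    rw [iterate_succ_apply, ← add_assoc, (hx (j + s) (by omega)).2, ih (by omega) (by omega)]

lemma IsChainUpTo.update_succ {x : ℕ → X} {N : ℕ} (hx : IsChainUpTo Δ φ x N) {v : X}
    (hv : v ∈ Δ) (hvx : phiTot Δ φ v = x N) : IsChainUpTo Δ φ (update x (N + 1) v) (N + 1) := by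
  intro j hj
  rw [update_of_ne (by omega : j ≠ N + 1)]
  rcases Nat.lt_succ_iff_lt_or_eq.1 hj with hj | rfl
  · rw [update_of_ne (by omega : j + 1 ≠ N + 1)]
    exact hx j hj
  · rw [update_self]
    exact ⟨hv, hvx⟩

lemma IsChainUpTo.mem_of_preimage_subset {x : ℕ → X} {N : ℕ} (hx : IsChainUpTo Δ φ x N)
    {S : Set X} (hS : ∀ v ∈ Δ, phiTot Δ φ v ∈ S → v ∈ S) (h0 : x 0 ∈ S) :
    ∀ j ≤ N, x j ∈ S := by
  intro j
  induction j with
  | zero => exact fun _ => h0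
  | succ j ih =>
    intro hj
    obtain ⟨hΔ, hφ⟩ := hx j (by omega)
    exact hS _ hΔ (hφ ▸ ih (by omega))

private lemma chainStep_iff {x : ℕ → X} {j : ℕ} :
    (x (j + 1) ∈ Δ ∧ phiTot Δ φ (x (j + 1)) = x j) ↔
      ∃ h : x (j + 1) ∈ Δ, φ ⟨x (j + 1), h⟩ = x j :=
  ⟨fun ⟨h, e⟩ => ⟨h, (phiTot_of_mem h).symm.trans e⟩,
    fun ⟨h, e⟩ => ⟨h, (phiTot_of_mem h).trans e⟩⟩

lemma mem_XFin_iff {g : ℕ → X ⊕ Unit} {N : ℕ} :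
    g ∈ XFin Δ φ Y N ↔ ∃ x, IsChainUpTo Δ φ x N ∧ x N ∈ Y ∧
      g = fun j => if j ≤ N then Sum.inl (x j) else Sum.inr () := by
  constructor
  · rintro ⟨x, hle, hgt, hchain, hN⟩
    refine ⟨x, fun j hj => chainStep_iff.2 ?_, hN, funext fun j => ?_⟩
    · simpa using hchain (j + 1) (by omega) hj
    · split_ifs with h
      exacts [hle j h, hgt j (by omega)]
  · rintro ⟨x, hx, hN, rfl⟩
    refine ⟨x, fun j hj => if_pos hj, fun j hj => if_neg (by omega), fun j hj1 hjN => ?_, hN⟩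
    obtain ⟨k, rfl⟩ := Nat.exists_eq_add_of_le' hj1
    exact chainStep_iff.1 (hx k hjN)

lemma mem_XInfSet_iff {g : ℕ → X ⊕ Unit} :
    g ∈ XInfSet Δ φ ↔ ∃ x, IsBackwardOrbit Δ φ x ∧ g = Sum.inl ∘ x := by
  constructor
  · rintro ⟨x, hgx, hchain⟩
    exact ⟨x, fun j => chainStep_iff.2 (by simpa using hchain (j + 1) (by omega)), funext hgx⟩
  · rintro ⟨x, hx, rfl⟩
    refine ⟨x, fun _ => rfl, fun j hj => ?_⟩
    obtain ⟨k, rfl⟩ := Nat.exists_eq_add_of_le' hj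
    exact chainStep_iff.1 (hx k)

lemma mem_XInfSet_of_periodic {g : ℕ → X ⊕ Unit} (hg : g ∈ XExt Δ φ Y) {n : ℕ} (hn : 1 ≤ n)
    (hper : Periodic g n) {a : X} (ha : g 0 = Sum.inl a) : g ∈ XInfSet Δ φ := by
  refine hg.resolve_left fun hfin => ?_
  obtain ⟨N, hN⟩ := mem_iUnion.1 hfin
  obtain ⟨x, -, -, rfl⟩ := mem_XFin_iff.1 hN
  have hfar : N < (N + 1) * n := by nlinarith
  have hback := hper.nat_mul_eq (N + 1)
  simp only [Nat.cast_id, hfar.not_ge, Nat.zero_le, if_true, if_false] at hback ha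
  exact Sum.inr_ne_inl (hback.trans ha)

lemma exists_mem_XExt_extending (hY : ∀ x : X, x ∉ Set.range φ → x ∈ Y) {c : ℕ → X} {p : ℕ}
    (hc : IsChainUpTo Δ φ c p) : ∃ g ∈ XExt Δ φ Y, ∀ j ≤ p, g j = Sum.inl (c j) := by
  have hpre : ∀ v, v ∉ Y → ∃ u, u ∈ Δ ∧ phiTot Δ φ u = v := by
    intro v hv
    obtain ⟨⟨u, hu⟩, rfl⟩ := not_not.1 (mt (hY v) hv)
    exact ⟨u, hu, phiTot_of_mem hu⟩
  -- keep choosing preimages, which exist off `Y`, until `Y` is reached (if ever)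
  have : Nonempty X := ⟨c 0⟩
  choose! pre hpreΔ hpreφ using hpre
  set x : ℕ → X := fun j => if j ≤ p then c j else pre^[j - p] (c p) with hx
  have hxc : ∀ j ≤ p, x j = c j := fun j hj => if_pos hj
  have hx_succ : ∀ j, p ≤ j → x (j + 1) = pre (x j) := by
    intro j hj
    simp only [hx, if_neg (by omega : ¬ j + 1 ≤ p)]
    rw [show j + 1 - p = (j - p) + 1 by omega, iterate_succ_apply']
    split_ifs with h
    · obtain rfl : j = p := by omega
      simp
    · rfl
  have hstep : ∀ j, (p ≤ j → x j ∉ Y) → x (j + 1) ∈ Δ ∧ phiTot Δ φ (x (j + 1)) = x j := by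
    intro j hj
    by_cases hjp : j < p
    · rw [hxc _ hjp, hxc _ hjp.le]
      exact hc j hjp
    · rw [hx_succ j (by omega)]
      exact ⟨hpreΔ _ (hj (by omega)), hpreφ _ (hj (by omega))⟩
  by_cases hreach : ∃ k, x (p + k) ∈ Y
  · classical
    set K := Nat.find hreach
    have hchain : IsChainUpTo Δ φ x (p + K) := fun j hj => hstep j fun hpj hjY =>
      Nat.find_min hreach (by omega : j - p < K) (by rwa [Nat.add_sub_cancel' hpj])
    refine ⟨_, Or.inl (mem_iUnion.2 ⟨p + K, mem_XFin_iff.2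
      ⟨x, hchain, Nat.find_spec hreach, rfl⟩⟩), fun j hj => ?_⟩
    simp [← hxc j hj, show j ≤ p + K by omega]
  · simp only [not_exists] at hreach
    refine ⟨_, Or.inr (mem_XInfSet_iff.2 ⟨x, fun j => hstep j fun hpj => ?_, rfl⟩),
      fun j hj => by simp [hxc j hj]⟩
    simpa [Nat.add_sub_cancel' hpj] using hreach (j - p)

lemma phiT_inl_shift {y : ℕ → X} (hy : IsBackwardOrbit Δ φ y) (s : ℕ) :
    phiT Δ φ (fun j => Sum.inl (y (j + (s + 1)))) = fun j => Sum.inl (y (j + s)) := by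
  funext j
  cases j with
  | zero =>
    obtain ⟨hΔ, hφ⟩ := hy s
    simp [phiT, hΔ, ← phiTot_of_mem, hφ]
  | succ j => exact congrArg (Sum.inl ∘ y) (by omega)

def extPeriodicPts (Δ : Set X) (φ : Δ → X) (Y : Set X) (n : ℕ) : Set (XExt Δ φ Y) :=
  {f | ∃ orb : ℕ → XExt Δ φ Y, orb 0 = f ∧ orb n = f ∧
      ∀ i : ℕ,
        (∃ x ∈ Δ, ((orb i : XExt Δ φ Y) : ℕ → X ⊕ Unit) 0 = Sum.inl x) ∧
        phiT Δ φ ((orb i : XExt Δ φ Y) : ℕ → X ⊕ Unit) =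
          ((orb (i + 1) : XExt Δ φ Y) : ℕ → X ⊕ Unit)}

lemma periodic_of_mem_extPeriodicPts {n : ℕ} {f : XExt Δ φ Y}
    (hf : f ∈ extPeriodicPts Δ φ Y n) :
    Periodic (f : ℕ → X ⊕ Unit) n ∧ ∃ x ∈ Δ, (f : ℕ → X ⊕ Unit) 0 = Sum.inl x := by
  obtain ⟨orb, h0, hn, hstep⟩ := hf
  have hshift : ∀ i j, (orb i : ℕ → X ⊕ Unit) (j + i) = (f : ℕ → X ⊕ Unit) j := by
    intro i
    induction i with
    | zero => intro j; rw [h0]; rfl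
    | succ i ih => intro j; rw [← (hstep i).2, ← add_assoc]; exact ih j
  exact ⟨fun j => hn ▸ hshift n j, h0 ▸ (hstep 0).1⟩

lemma mem_extPeriodicPts_iff {n : ℕ} (hn : 1 ≤ n) {f : XExt Δ φ Y} :
    f ∈ extPeriodicPts Δ φ Y n ↔
      ∃ y, IsBackwardOrbit Δ φ y ∧ (f : ℕ → X ⊕ Unit) = Sum.inl ∘ y ∧ Periodic y n := by
  constructor
  · intro hf
    obtain ⟨hper, x, -, hx⟩ := periodic_of_mem_extPeriodicPts hf
    obtain ⟨y, hy, hfy⟩ := mem_XInfSet_iff.1 (mem_XInfSet_of_periodic f.2 hn hper hx)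
    refine ⟨y, hy, hfy, fun j => Sum.inl_injective (β := Unit) ?_⟩
    simpa [hfy] using hper j
  · rintro ⟨y, hy, hfy, hper⟩
    obtain ⟨k, rfl⟩ : ∃ k, n = k + 1 := ⟨n - 1, by omega⟩
    have hshift_mem : ∀ s, (fun j => Sum.inl (y (j + s)) : ℕ → X ⊕ Unit) ∈ XExt Δ φ Y :=
      fun s => Or.inr (mem_XInfSet_iff.2
        ⟨_, fun j => by simpa [add_right_comm] using hy (j + s), rfl⟩)
    have hshift_per : ∀ s, (fun j => Sum.inl (y (j + (s + (k + 1)))) : ℕ → X ⊕ Unit) =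
        fun j => Sum.inl (y (j + s)) := fun s => funext fun j => by rw [← add_assoc, hper]
    -- `φ̃` undoes the shift `y ↦ y (· + 1)` and `k * i ≡ -i [MOD k + 1]`, so the shift by `k * i`
    -- is `φ̃ⁱ f`
    refine ⟨fun i => ⟨_, hshift_mem (k * i)⟩, Subtype.ext ?_, Subtype.ext ?_, fun i => ⟨?_, ?_⟩⟩
    · exact hfy.symm
    · funext j
      simpa [hfy] using hper.nat_mul k j
    · refine ⟨y (0 + k * i), ?_, rfl⟩
      rw [← hper, ← add_assoc]
      exact (hy _).1
    · change phiT Δ φ (fun j => Sum.inl (y (j + k * i))) = fun j => Sum.inl (y (j + k * (i + 1)))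
      rw [← hshift_per (k * i), ← add_assoc (k * i), phiT_inl_shift hy, mul_add_one]

def iterDom (Δ : Set X) (φ : Δ → X) (k : ℕ) : Set X :=
  {x | ∀ i < k, (phiTot Δ φ)^[i] x ∈ Δ}

lemma iterDom_succ (k : ℕ) : iterDom Δ φ (k + 1) = Δ ∩ phiTot Δ φ ⁻¹' iterDom Δ φ k := by
  ext x
  simp only [iterDom, Nat.forall_lt_succ_left, iterate_zero_apply, iterate_succ_apply]
  rfl

lemma iterDom_antitone {k l : ℕ} (h : k ≤ l) : iterDom Δ φ l ⊆ iterDom Δ φ k :=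
  fun _ hx i hi => hx i (by omega)

lemma isChainUpTo_iterate {w : X} {p : ℕ} (hw : w ∈ iterDom Δ φ p) :
    IsChainUpTo Δ φ (fun j => (phiTot Δ φ)^[p - j] w) p := by
  intro j hj
  refine ⟨hw _ (by omega), ?_⟩
  rw [← iterate_succ_apply' (phiTot Δ φ)]
  congr 2
  omega

lemma IsBackwardOrbit.mem_iterDom {y : ℕ → X} (hy : IsBackwardOrbit Δ φ y) (p : ℕ) :
    y p ∈ iterDom Δ φ p := by
  intro i hi
  rw [← Nat.sub_sub_self hi.le, (hy.isChainUpTo p).iterate_sub_apply (Nat.sub_le p i) le_rfl]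
  obtain ⟨k, hk⟩ := Nat.exists_eq_add_of_lt hi
  rw [show p - i = k + 1 by omega]
  exact (hy k).1

def entrancelessCyclePts (Δ : Set X) (φ : Δ → X) (Y : Set X) : Set X :=
  {x : X | ∃ n : ℕ, 1 ≤ n ∧
    ∃ orb : ℕ → X, orb 0 = x ∧ orb n = x ∧
      (∀ i : ℕ, ∃ h : orb i ∈ Δ, φ ⟨orb i, h⟩ = orb (i + 1)) ∧
      (∀ i < n, orb i ∉ Y) ∧
      ¬∃ (y : X) (hy : y ∈ Δ), (∀ i < n, y ≠ orb i) ∧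
        ∃ i < n, φ ⟨y, hy⟩ = orb i}

lemma mem_entrancelessCyclePts_iff {x : X} :
    x ∈ entrancelessCyclePts Δ φ Y ↔ ∃ n, 1 ≤ n ∧ IsPeriodicPt (phiTot Δ φ) n x ∧
      (∀ t, (phiTot Δ φ)^[t] x ∈ Δ) ∧ (∀ t, (phiTot Δ φ)^[t] x ∉ Y) ∧
      ∀ v ∈ Δ, phiTot Δ φ v ∈ range (fun t => (phiTot Δ φ)^[t] x) →
        v ∈ range (fun t => (phiTot Δ φ)^[t] x) := by
  constructor
  · rintro ⟨n, hn, orb, h0, hper, hstep, hY, hentr⟩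
    have horb : ∀ i, orb i = (phiTot Δ φ)^[i] x := by
      intro i
      induction i with
      | zero => exact h0
      | succ i ih =>
        obtain ⟨h, he⟩ := hstep i
        rw [iterate_succ_apply', ← ih, ← he, phiTot_of_mem h]
    have hper : IsPeriodicPt (phiTot Δ φ) n x := (horb n).symm.trans hper
    have hmod : ∀ t, (phiTot Δ φ)^[t] x = orb (t % n) := fun t => by
      rw [horb, hper.iterate_mod_apply]
    have hlt : ∀ t, t % n < n := fun t => Nat.mod_lt t hn
    refine ⟨n, hn, hper, fun t => hmod t ▸ (hstep _).1, fun t => hmod t ▸ hY _ (hlt t), ?_⟩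
    rintro v hv ⟨t, ht⟩
    by_contra hvO
    refine hentr ⟨v, hv, fun i _ hvi => hvO ⟨i, (horb i ▸ hvi).symm⟩, t % n, hlt t, ?_⟩
    rw [← hmod, ← phiTot_of_mem (φ := φ) hv]
    exact ht.symm
  · rintro ⟨n, hn, hper, hΔ, hY, hentr⟩
    refine ⟨n, hn, fun i => (phiTot Δ φ)^[i] x, rfl, hper, fun i => ⟨hΔ i, ?_⟩,
      fun i _ => hY i, ?_⟩
    · exact (phiTot_of_mem (hΔ i)).symm.trans (iterate_succ_apply' _ i x).symm
    · rintro ⟨v, hv, hvO, i, -, hvi⟩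
      obtain ⟨t, rfl⟩ := hentr v hv ⟨i, by rw [phiTot_of_mem hv, hvi]⟩
      exact hvO (t % n) (Nat.mod_lt t hn) (hper.iterate_mod_apply t).symm

lemma mem_iterDom_of_mem_entrancelessCyclePts {x : X} (hx : x ∈ entrancelessCyclePts Δ φ Y)
    (k : ℕ) : x ∈ iterDom Δ φ k := by
  obtain ⟨-, -, -, hΔ, -⟩ := mem_entrancelessCyclePts_iff.1 hx
  exact fun i _ => hΔ i

lemma mem_extPeriodicPts_of_head_mem {w : X} (hw : w ∈ entrancelessCyclePts Δ φ Y) {n : ℕ}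
    (hn : 1 ≤ n) (hwn : IsPeriodicPt (phiTot Δ φ) n w) {g : ℕ → X ⊕ Unit}
    (hg : g ∈ XExt Δ φ Y) (hg0 : g 0 = Sum.inl w) :
    (⟨g, hg⟩ : XExt Δ φ Y) ∈ extPeriodicPts Δ φ Y n := by
  obtain ⟨-, -, -, -, hY, hentr⟩ := mem_entrancelessCyclePts_iff.1 hw
  rcases hg with hfin | hinf
  · obtain ⟨N, hN⟩ := mem_iUnion.1 hfin
    obtain ⟨x, hx, hxN, rfl⟩ := mem_XFin_iff.1 hN
    have hx0 : x 0 = w := by simpa using hg0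
    obtain ⟨t, ht⟩ := hx.mem_of_preimage_subset hentr ⟨0, hx0.symm⟩ N le_rfl
    exact absurd hxN (ht ▸ hY t)
  · obtain ⟨y, hy, rfl⟩ := mem_XInfSet_iff.1 hinf
    have hy0 : y 0 = w := by simpa using hg0
    refine (mem_extPeriodicPts_iff hn).2 ⟨y, hy, rfl, fun j => ?_⟩
    obtain ⟨t, ht⟩ :=
      (hy.isChainUpTo (j + n)).mem_of_preimage_subset hentr ⟨0, hy0.symm⟩ (j + n) le_rfl
    calc y (j + n) = (phiTot Δ φ)^[n] (y (j + n)) := by rw [← ht]; exact (hwn.apply_iterate t).symm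
      _ = y j := by
        simpa using (hy.isChainUpTo (j + n)).iterate_sub_apply (Nat.le_add_right j n) le_rfl

lemma isBackwardOrbit_iterate_mul {x : X} {k : ℕ} (hx : IsPeriodicPt (phiTot Δ φ) (k + 1) x)
    (hΔ : ∀ t, (phiTot Δ φ)^[t] x ∈ Δ) :
    IsBackwardOrbit Δ φ (fun j => (phiTot Δ φ)^[k * j] x) := by
  refine fun j => ⟨hΔ _, ?_⟩
  rw [← iterate_succ_apply' (phiTot Δ φ), mul_add_one, Nat.succ_eq_add_one, add_assoc,
    iterate_add_apply, hx.eq]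

lemma exists_periodic_of_extending (hY : ∀ x : X, x ∉ Set.range φ → x ∈ Y) {n m q : ℕ}
    (hn : 1 ≤ n) {c d : ℕ → X} (hmq : m ≤ q) (hd : IsChainUpTo Δ φ d q)
    (hdc : ∀ j ≤ m, d j = c j)
    (H : ∀ g (hg : g ∈ XExt Δ φ Y), (∀ j ≤ m, g j = Sum.inl (c j)) →
      (⟨g, hg⟩ : XExt Δ φ Y) ∈ extPeriodicPts Δ φ Y n) :
    ∃ y, Periodic y n ∧ ∀ j ≤ q, y j = d j := by
  obtain ⟨g, hg, hgd⟩ := exists_mem_XExt_extending hY hd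
  obtain ⟨y, -, hgy, hper⟩ := (mem_extPeriodicPts_iff hn).1
    (H g hg fun j hj => by rw [hgd j (hj.trans hmq), hdc j hj])
  exact ⟨y, hper, fun j hj =>
    Sum.inl_injective (β := Unit) ((congrFun hgy j).symm.trans (hgd j hj))⟩

lemma mem_entrancelessCyclePts_of_extensions_periodic
    (hY : ∀ x : X, x ∉ Set.range φ → x ∈ Y) {n m p : ℕ} (hn : 1 ≤ n) (hp : m + 2 * n ≤ p)
    {w : X} (hw : w ∈ iterDom Δ φ p)
    (H : ∀ g (hg : g ∈ XExt Δ φ Y), (∀ j ≤ m, g j = Sum.inl ((phiTot Δ φ)^[p - j] w)) →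
      (⟨g, hg⟩ : XExt Δ φ Y) ∈ extPeriodicPts Δ φ Y n) :
    w ∈ entrancelessCyclePts Δ φ Y := by
  set c : ℕ → X := fun j => (phiTot Δ φ)^[p - j] w with hc_def
  have hc : IsChainUpTo Δ φ c p := isChainUpTo_iterate hw
  have hc_sub : ∀ i ≤ p, c (p - i) = (phiTot Δ φ)^[i] w := fun i hi => by
    simp only [hc_def, Nat.sub_sub_self hi]
  have hcycle : IsPeriodicPt (phiTot Δ φ) n w := by
    obtain ⟨y, hper, hyc⟩ := exists_periodic_of_extending hY hn (by omega) hc (fun _ _ => rfl) H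
    calc (phiTot Δ φ)^[n] w = y (p - n) := by rw [hyc _ (Nat.sub_le p n), hc_sub n (by omega)]
      _ = y p := by rw [← hper, Nat.sub_add_cancel (by omega)]
      _ = w := by simp [hyc p le_rfl, hc_def]
  have hmod : ∀ t, ∃ i < n, (phiTot Δ φ)^[t] w = (phiTot Δ φ)^[i] w := fun t =>
    ⟨t % n, Nat.mod_lt t hn, (hcycle.iterate_mod_apply t).symm⟩
  refine mem_entrancelessCyclePts_iff.2 ⟨n, hn, hcycle, fun t => ?_, fun t htY => ?_, ?_⟩
  · obtain ⟨i, hi, hti⟩ := hmod t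
    exact hti ▸ hw i (by omega)
  · -- cut at a point of `Y`, the chain is a finite, hence non-periodic, point of `X̃`
    obtain ⟨i, hi, hti⟩ := hmod t
    have hfin := mem_XFin_iff.2 ⟨c, hc.mono (Nat.sub_le p i), hc_sub i (by omega) ▸ hti ▸ htY, rfl⟩
    obtain ⟨y, -, hgy, -⟩ := (mem_extPeriodicPts_iff hn).1
      (H _ (Or.inl (mem_iUnion.2 ⟨p - i, hfin⟩)) fun j hj => if_pos (by omega))
    simpa using congrFun hgy (p - i + 1)
  · -- extend the chain through `v`; periodicity then returns `v` to the orbit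
    rintro v hv ⟨t, ht⟩
    obtain ⟨i, hi, hti⟩ := hmod t
    obtain ⟨y, hper, hyd⟩ := exists_periodic_of_extending hY hn (by omega : m ≤ p - i + 1)
      ((hc.mono (Nat.sub_le p i)).update_succ hv
        (by rw [hc_sub i (by omega), ← hti]; exact ht.symm))
      (fun j hj => update_of_ne (by omega) _ _) H
    refine ⟨i + n - 1, ?_⟩
    calc (phiTot Δ φ)^[i + n - 1] w = update c (p - i + 1) v (p - i + 1 - n) := by
          rw [update_of_ne (by omega), ← hc_sub _ (by omega)]
          congr 1
          omega
      _ = y (p - i + 1) := by rw [← hyd _ (by omega), ← hper, Nat.sub_add_cancel (by omega)]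
      _ = v := by rw [hyd _ le_rfl, update_self]

end PartialDynamics

section Topology

variable {X : Type*} [TopologicalSpace X] {Δ : Set X} {φ : Δ → X} {Y : Set X}

lemma continuousOn_phiTot (hφc : Continuous φ) : ContinuousOn (phiTot Δ φ) Δ := by
  rw [continuousOn_iff_continuous_domRestrict]
  convert hφc using 1
  funext a
  exact phiTot_of_mem a.2

lemma isOpen_iterDom (hΔ : IsOpen Δ) (hφc : Continuous φ) (k : ℕ) : IsOpen (iterDom Δ φ k) := by
  induction k with
  | zero => simp [iterDom]
  | succ k ih =>
    exact iterDom_succ (φ := φ) k ▸ (continuousOn_phiTot hφc).isOpen_inter_preimage hΔ ih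

lemma continuousOn_iterate_iterDom (hφc : Continuous φ) (k : ℕ) :
    ContinuousOn (phiTot Δ φ)^[k] (iterDom Δ φ k) := by
  induction k with
  | zero => exact continuousOn_id
  | succ k ih =>
    rw [iterate_succ, iterDom_succ]
    exact ih.comp ((continuousOn_phiTot hφc).mono inter_subset_left) fun _ hx => hx.2

lemma nonempty_interior_extPeriodicPts [LocallyCompactSpace X] [T2Space X]
    (hφc : Continuous φ) (h : (interior (entrancelessCyclePts Δ φ Y)).Nonempty) :
    ∃ n, 1 ≤ n ∧ (interior (extPeriodicPts Δ φ Y n)).Nonempty := by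
  obtain ⟨n, hn, V, hVo, ⟨a, haV⟩, hVE, hVper⟩ :=
    exists_isOpen_subset_isPeriodicPt (f := phiTot Δ φ) isOpen_interior h
      (fun k => (continuousOn_iterate_iterDom hφc k).mono fun x hx =>
        mem_iterDom_of_mem_entrancelessCyclePts (interior_subset hx) k)
      (fun x hx => by
        obtain ⟨n, hn, hper, -⟩ := mem_entrancelessCyclePts_iff.1 (interior_subset hx)
        exact ⟨n, hn, hper⟩)
  let B : Set (XExt Δ φ Y) := (fun f => (f : ℕ → X ⊕ Unit) 0) ⁻¹' (Sum.inl '' V)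
  have hBo : IsOpen B :=
    (isOpenMap_inl V hVo).preimage ((continuous_apply 0).comp continuous_subtype_val)
  have hB : B ⊆ extPeriodicPts Δ φ Y n := by
    rintro ⟨g, hg⟩ ⟨w, hwV, hw⟩
    exact mem_extPeriodicPts_of_head_mem (interior_subset (hVE hwV)) hn (hVper w hwV) hg hw.symm
  obtain ⟨k, rfl⟩ : ∃ k, n = k + 1 := ⟨n - 1, by omega⟩
  have ha := isBackwardOrbit_iterate_mul (hVper a haV) fun t =>
    mem_iterDom_of_mem_entrancelessCyclePts (interior_subset (hVE haV)) (t + 1) t t.lt_succ_self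
  exact ⟨k + 1, hn, ⟨_, Or.inr (mem_XInfSet_iff.2 ⟨_, ha, rfl⟩)⟩,
    interior_maximal hB hBo ⟨a, haV, rfl⟩⟩

lemma nonempty_interior_entrancelessCyclePts (hΔ : IsOpen Δ) (hφc : Continuous φ)
    (hY : ∀ x : X, x ∉ Set.range φ → x ∈ Y) {n : ℕ} (hn : 1 ≤ n)
    (h : (interior (extPeriodicPts Δ φ Y n)).Nonempty) :
    (interior (entrancelessCyclePts Δ φ Y)).Nonempty := by
  obtain ⟨f₀, hf₀⟩ := h
  obtain ⟨y, hy, hf₀y, -⟩ := (mem_extPeriodicPts_iff hn).1 (interior_subset hf₀)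
  obtain ⟨O, hO, hOsub⟩ := (mem_nhds_subtype _ _ _).1 (isOpen_interior.mem_nhds hf₀)
  rw [nhds_pi, Filter.mem_pi'] at hO
  obtain ⟨I, t, ht, hIt⟩ := hO
  set m := I.sup id
  set p := m + 2 * n
  have hyp : y p ∈ iterDom Δ φ p := hy.mem_iterDom p
  have hnear : ∀ᶠ w in 𝓝 (y p),
      w ∈ iterDom Δ φ p ∧ ∀ k ∈ I, Sum.inl ((phiTot Δ φ)^[p - k] w) ∈ t k := by
    refine Filter.Eventually.and ((isOpen_iterDom hΔ hφc p).mem_nhds hyp)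
      ((eventually_all_finset I).2 fun k hk => ?_)
    have hcont : ContinuousAt (fun w => (Sum.inl ((phiTot Δ φ)^[p - k] w) : X ⊕ Unit)) (y p) :=
      continuous_inl.continuousAt.comp ((continuousOn_iterate_iterDom hφc (p - k)).continuousAt
        ((isOpen_iterDom hΔ hφc _).mem_nhds (iterDom_antitone (Nat.sub_le p k) hyp)))
    have hval : Sum.inl ((phiTot Δ φ)^[p - k] (y p)) = (f₀ : ℕ → X ⊕ Unit) k := by
      have hkm : k ≤ m := Finset.le_sup (f := id) hk
      rw [hf₀y, (hy.isChainUpTo p).iterate_sub_apply (by omega) le_rfl]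
      rfl
    exact hcont (by simpa only [hval] using ht k)
  refine ⟨y p, mem_interior_iff_mem_nhds.2 (hnear.mono fun w ⟨hw, hwt⟩ => ?_)⟩
  refine mem_entrancelessCyclePts_of_extensions_periodic hY hn le_rfl hw fun g hg hgc =>
    interior_subset (hOsub (hIt fun k hk => ?_))
  change g k ∈ t k
  rw [hgc k (Finset.le_sup (f := id) hk)]
  exact hwt k hk

end Topology

theorem stmt14_general {X : Type*} [TopologicalSpace X] [LocallyCompactSpace X] [T2Space X]
    (Δ : Set X) (hΔ : IsOpen Δ) (φ : Δ → X) (hφc : Continuous φ)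
    (Y : Set X) (hY : ∀ x : X, x ∉ Set.range φ → x ∈ Y) :
    -- `φ̃` is topologically free ...
    (∀ n : ℕ, 1 ≤ n →
      interior {f : XExt Δ φ Y |
        ∃ orb : ℕ → XExt Δ φ Y, orb 0 = f ∧ orb n = f ∧
          ∀ i : ℕ,
            (∃ x ∈ Δ, ((orb i : XExt Δ φ Y) : ℕ → X ⊕ Unit) 0 = Sum.inl x) ∧
            phiT Δ φ ((orb i : XExt Δ φ Y) : ℕ → X ⊕ Unit) =
              ((orb (i + 1) : XExt Δ φ Y) : ℕ → X ⊕ Unit)} = ∅)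
    ↔ -- ... iff `φ` is topologically free outside `Y`
    interior {x : X | ∃ n : ℕ, 1 ≤ n ∧
      ∃ orb : ℕ → X, orb 0 = x ∧ orb n = x ∧
        (∀ i : ℕ, ∃ h : orb i ∈ Δ, φ ⟨orb i, h⟩ = orb (i + 1)) ∧
        -- the orbit `{x, φ(x), …, φ^{n-1}(x)}` does not meet `Y` ...
        (∀ i < n, orb i ∉ Y) ∧
        -- ... and has no entrance
        ¬∃ (y : X) (hy : y ∈ Δ), (∀ i < n, y ≠ orb i) ∧
          ∃ i < n, φ ⟨y, hy⟩ = orb i} = ∅ := by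
  constructor
  · intro hfree
    by_contra hne
    obtain ⟨n, hn, hint⟩ := nonempty_interior_extPeriodicPts hφc (nonempty_iff_ne_empty.2 hne)
    exact hint.ne_empty (hfree n hn)
  · intro hfree n hn
    by_contra hne
    exact (nonempty_interior_entrancelessCyclePts hΔ hφc hY hn
      (nonempty_iff_ne_empty.2 hne)).ne_empty hfree

/-- The extended map `φ̃` is topologically free (for every `n ≥ 1` the set
of its periodic points of period `n` has empty interior in `X̃`) if and only if `φ` is
topologically free outside `Y` (the set of periodic points of `φ` whose orbit avoids `Y`
and has no entrance has empty interior in `X`). Periodicity of period `n` at a point `z` is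
encoded by the existence of an infinite forward trajectory `orb` (each step staying in the
domain) with `orb 0 = z = orb n`. -/
theorem stmt14 {X : Type*} [TopologicalSpace X] [LocallyCompactSpace X] [T2Space X]
    (Δ : Set X) (hΔ : IsOpen Δ) (φ : Δ → X) (hφc : Continuous φ)
    (hφp : ∀ K : Set X, IsCompact K → IsCompact (φ ⁻¹' K))
    (Y : Set X) (hYc : IsClosed Y) (hY : ∀ x : X, x ∉ Set.range φ → x ∈ Y) :
    -- `φ̃` is topologically free ...
    (∀ n : ℕ, 1 ≤ n →
      interior {f : XExt Δ φ Y |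
        ∃ orb : ℕ → XExt Δ φ Y, orb 0 = f ∧ orb n = f ∧
          ∀ i : ℕ,
            (∃ x ∈ Δ, ((orb i : XExt Δ φ Y) : ℕ → X ⊕ Unit) 0 = Sum.inl x) ∧
            phiT Δ φ ((orb i : XExt Δ φ Y) : ℕ → X ⊕ Unit) =
              ((orb (i + 1) : XExt Δ φ Y) : ℕ → X ⊕ Unit)} = ∅)
    ↔ -- ... iff `φ` is topologically free outside `Y`
    interior {x : X | ∃ n : ℕ, 1 ≤ n ∧
      ∃ orb : ℕ → X, orb 0 = x ∧ orb n = x ∧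
        (∀ i : ℕ, ∃ h : orb i ∈ Δ, φ ⟨orb i, h⟩ = orb (i + 1)) ∧
        -- the orbit `{x, φ(x), …, φ^{n-1}(x)}` does not meet `Y` ...
        (∀ i < n, orb i ∉ Y) ∧
        -- ... and has no entrance
        ¬∃ (y : X) (hy : y ∈ Δ), (∀ i < n, y ≠ orb i) ∧
          ∃ i < n, φ ⟨y, hy⟩ = orb i} = ∅ :=
  stmt14_general Δ hΔ φ hφc Y hY
end

section
/- Let X be a locally compact Hausdorff space and let α : C₀(X) → C₀(X) be a *-homomorphism, where C₀(X) is the C*-algebra of continuous complex-valued functions on X vanishing at infinity. Then there exist an open subset Δ ⊆ X and a continuous proper map φ : Δ → X such that for every a ∈ C₀(X): α(a)(x) = a(φ(x)) for all x ∈ Δ, and α(a)(x) = 0 for all x ∉ Δ. -/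
/-!
A nonzero character `χ` of `C₀(X)` is evaluation at a point. Otherwise every point has a
function in `ker χ` not vanishing there; pick `b` with `χ b = 1`. By compactness of
`{|b| ≥ 1/2}`, some `g ∈ ker χ` has `|g|² ≥ δ > 0` there, and with `c = b / max(|g|², δ)` the
element `b - c |g|²` has norm `≤ 1/2` but `χ`-value `1`, contradicting the contractivity of
`*`-homomorphisms. Applying this to `a ↦ α a x` gives `Δ` (the points where this character is
nonzero) and `φ`; continuity and properness of `φ` are then tested against Urysohn functions.
-/

open scoped ZeroAtInfty Classical

open Filter Set Topology

theorem NonUnitalAlgHom.eq_of_ker_le {𝕜 A : Type*} [Field 𝕜] [NonUnitalNonAssocRing A]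
    [Module 𝕜 A] {χ ψ : A →ₙₐ[𝕜] 𝕜} (hχ : χ ≠ 0) (hψ : ψ ≠ 0)
    (hker : ∀ a, χ a = 0 → ψ a = 0) : ψ = χ := by
  obtain ⟨b, hb⟩ : ∃ b, χ b = 1 := by
    obtain ⟨a, ha⟩ := DFunLike.ne_iff.mp hχ
    exact ⟨(χ a)⁻¹ • a, by simpa [map_smul] using inv_mul_cancel₀ ha⟩
  have hψ_eq : ∀ a, ψ a = χ a * ψ b := fun a => by
    simpa [sub_eq_zero] using hker (a - χ a • b) (by simp [hb])
  have hψb : ψ b = 1 := by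
    have hidem : ψ b * ψ b = ψ b := by simpa [hb] using (map_mul ψ b b).symm.trans (hψ_eq (b * b))
    rcases mul_eq_zero.mp (show ψ b * (ψ b - 1) = 0 by linear_combination hidem) with h | h
    · exact absurd (NonUnitalAlgHom.ext fun a => by simp [hψ_eq a, h]) hψ
    · exact sub_eq_zero.mp h
  exact NonUnitalAlgHom.ext fun a => by simp [hψ_eq a, hψb]

namespace ZeroAtInftyContinuousMap

variable {X : Type*} [TopologicalSpace X]

theorem exists_eqOn_one_eqOn_zero [LocallyCompactSpace X] [T2Space X] {K U : Set X}
    (hK : IsCompact K) (hU : IsOpen U) (hKU : K ⊆ U) :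
    ∃ a : C₀(X, ℂ), EqOn a 1 K ∧ EqOn a 0 Uᶜ := by
  obtain ⟨f, hf1, hf0, hfc, -⟩ := exists_continuous_one_zero_of_isCompact
    hK hU.isClosed_compl (disjoint_compl_right_iff_subset.mpr hKU)
  refine ⟨⟨⟨fun x => (f x : ℂ), by fun_prop⟩,
    (hfc.comp_left Complex.ofReal_zero).is_zero_at_infty⟩, fun x hx => ?_, fun x hx => ?_⟩
  · simp [hf1 hx]
  · simp [hf0 hx]

theorem isCompact_le_norm (f : C₀(X, ℂ)) {ε : ℝ} (hε : 0 < ε) :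
    IsCompact {x | ε ≤ ‖f x‖} := by
  have hsmall : {x | ‖f x‖ < ε} ∈ cocompact X := by
    simpa [preimage, Metric.ball] using
      mem_map.mp (zero_at_infty f (Metric.ball_mem_nhds (0 : ℂ) hε))
  obtain ⟨t, ht, hsub⟩ := mem_cocompact'.mp hsmall
  exact ht.of_isClosed_subset (isClosed_le continuous_const (map_continuous f).norm)
    fun x hx => hsub (by simpa using hx)

noncomputable def evalNonUnitalStarAlgHom (x : X) : C₀(X, ℂ) →⋆ₙₐ[ℂ] ℂ where
  toFun a := a x
  map_smul' _ _ := rfl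
  map_zero' := rfl
  map_add' _ _ := rfl
  map_mul' _ _ := rfl
  map_star' _ := rfl

@[simp]
theorem evalNonUnitalStarAlgHom_apply (x : X) (a : C₀(X, ℂ)) :
    evalNonUnitalStarAlgHom x a = a x := rfl

theorem exists_map_eq_zero_forall_ne_zero {F : Type*} [FunLike F C₀(X, ℂ) ℂ]
    [NonUnitalRingHomClass F C₀(X, ℂ) ℂ] (χ : F) (h : ∀ y, ∃ f : C₀(X, ℂ), χ f = 0 ∧ f y ≠ 0)
    {K : Set X} (hK : IsCompact K) : ∃ g : C₀(X, ℂ), χ g = 0 ∧ ∀ x ∈ K, g x ≠ 0 := by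
  choose f hf0 hfy using h
  obtain ⟨t, ht⟩ := hK.elim_finite_subcover (fun y => {x | f y x ≠ 0})
    (fun y => isOpen_ne_fun (map_continuous (f y)) continuous_const)
    (fun x _ => mem_iUnion.mpr ⟨x, hfy x⟩)
  refine ⟨∑ y ∈ t, star (f y) * f y, by simp [map_sum, hf0], fun x hx => ?_⟩
  obtain ⟨y, hyt, hy⟩ := mem_iUnion₂.mp (ht hx)
  have hval : (∑ y ∈ t, star (f y) * f y) x = ((∑ y ∈ t, ‖f y x‖ ^ 2 : ℝ) : ℂ) := by
    rw [← evalNonUnitalStarAlgHom_apply x, map_sum, Complex.ofReal_sum]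
    exact Finset.sum_congr rfl fun y _ => by simp [Complex.conj_mul']
  rw [hval, Complex.ofReal_ne_zero]
  exact (Finset.sum_pos' (fun _ _ => by positivity) ⟨y, hyt, pow_pos (norm_pos_iff.mpr hy) 2⟩).ne'

theorem tendsto_cocompact_zero_of_norm_le (b : C₀(X, ℂ)) {f : X → ℂ} {C : ℝ}
    (h : ∀ x, ‖f x‖ ≤ C * ‖b x‖) : Tendsto f (cocompact X) (𝓝 0) :=
  squeeze_zero_norm h (by simpa using ((zero_at_infty b).norm).const_mul C)

theorem exists_norm_sub_mul_star_mul_le {b g : C₀(X, ℂ)} {ε : ℝ} (hε : 0 < ε)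
    (hg : ∀ x, ε ≤ ‖b x‖ → g x ≠ 0) : ∃ c : C₀(X, ℂ), ‖b - c * (star g * g)‖ ≤ ε := by
  set K := {x | ε ≤ ‖b x‖}
  obtain ⟨δ, hδ, hδK⟩ := (isCompact_le_norm b hε).exists_forall_le' (f := fun x => ‖g x‖ ^ 2)
    (by fun_prop) fun x hx => pow_pos (norm_pos_iff.mpr (hg x hx)) 2
  set m : X → ℝ := fun x => max (‖g x‖ ^ 2) δ
  have hm : ∀ x, 0 < m x := fun x => lt_max_of_lt_right hδ
  let c : C₀(X, ℂ) := ⟨⟨fun x => b x / (m x : ℂ), by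
      have : ∀ x, (m x : ℂ) ≠ 0 := fun x => Complex.ofReal_ne_zero.mpr (hm x).ne'
      fun_prop (disch := exact this _)⟩,
    tendsto_cocompact_zero_of_norm_le b (C := δ⁻¹) fun x => by
      rw [norm_div, Complex.norm_real, Real.norm_of_nonneg (hm x).le, div_eq_inv_mul]
      gcongr
      exact le_max_right _ _⟩
  refine ⟨c, ?_⟩
  rw [← norm_toBCF_eq_norm]
  refine (BoundedContinuousFunction.norm_le hε.le).mpr fun x => ?_
  have hr : ‖g x‖ ^ 2 / m x ≤ 1 := (div_le_one (hm x)).mpr (le_max_left _ _)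
  have hval : (b - c * (star g * g)) x = b x * ((1 - ‖g x‖ ^ 2 / m x : ℝ) : ℂ) := by
    simp [c, Complex.conj_mul']
    ring
  change ‖(b - c * (star g * g)) x‖ ≤ ε
  rw [hval, norm_mul, Complex.norm_real, Real.norm_of_nonneg (by linarith)]
  by_cases hx : x ∈ K
  · have : m x = ‖g x‖ ^ 2 := max_eq_left (hδK x hx)
    simp [this, div_self (pow_ne_zero 2 (norm_ne_zero_iff.mpr (hg x hx))), hε.le]
  · have : ‖b x‖ < ε := by simpa [K] using hx
    have : 0 ≤ ‖g x‖ ^ 2 / m x := div_nonneg (by positivity) (hm x).le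
    nlinarith [norm_nonneg (b x)]

theorem exists_apply_eq_zero_of_map_eq_zero {χ : C₀(X, ℂ) →⋆ₙₐ[ℂ] ℂ} (hχ : χ ≠ 0) :
    ∃ y, ∀ f : C₀(X, ℂ), χ f = 0 → f y = 0 := by
  by_contra! hsep
  obtain ⟨b, hb⟩ : ∃ b, χ b = 1 := by
    obtain ⟨a, ha⟩ := DFunLike.ne_iff.mp hχ
    exact ⟨(χ a)⁻¹ • a, by simpa [map_smul] using inv_mul_cancel₀ ha⟩
  obtain ⟨g, hg, hgK⟩ :=
    exists_map_eq_zero_forall_ne_zero χ hsep (isCompact_le_norm b (ε := 1 / 2) (by norm_num))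
  obtain ⟨c, hc⟩ := exists_norm_sub_mul_star_mul_le (by norm_num) hgK
  have hχ_one : χ (b - c * (star g * g)) = 1 := by simp [hb, hg]
  have := NonUnitalStarAlgHom.norm_apply_le χ (b - c * (star g * g))
  rw [hχ_one, norm_one] at this
  linarith

variable [LocallyCompactSpace X] [T2Space X]

theorem exists_map_eq_apply {χ : C₀(X, ℂ) →⋆ₙₐ[ℂ] ℂ} (hχ : χ ≠ 0) :
    ∃ y, ∀ f : C₀(X, ℂ), χ f = f y := by
  obtain ⟨y, hy⟩ := exists_apply_eq_zero_of_map_eq_zero hχ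
  have hevy : (evalNonUnitalStarAlgHom y).toNonUnitalAlgHom ≠ 0 := by
    obtain ⟨a, ha, -⟩ := exists_eqOn_one_eqOn_zero isCompact_singleton isOpen_univ
      (subset_univ {y})
    exact DFunLike.ne_iff.mpr ⟨a, by simp [ha (mem_singleton y)]⟩
  have hχ' : χ.toNonUnitalAlgHom ≠ 0 := fun h =>
    hχ (NonUnitalStarAlgHom.ext (by simpa using DFunLike.congr_fun h))
  have hχ_eq := NonUnitalAlgHom.eq_of_ker_le hχ' hevy (by simpa using hy)
  exact ⟨y, fun f => by simpa using (DFunLike.congr_fun hχ_eq f).symm⟩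

theorem continuous_of_forall_continuous_comp {Y : Type*} [TopologicalSpace Y] {φ : Y → X}
    (h : ∀ a : C₀(X, ℂ), Continuous (a ∘ φ)) : Continuous φ := by
  refine continuous_iff_continuousAt.mpr fun y => tendsto_nhds.mpr fun V hV hyV => ?_
  obtain ⟨a, ha1, ha0⟩ := exists_eqOn_one_eqOn_zero isCompact_singleton hV
    (singleton_subset_iff.mpr hyV)
  have hnhds : (a ∘ φ) ⁻¹' {0}ᶜ ∈ 𝓝 y :=
    (isOpen_compl_singleton.preimage (h a)).mem_nhds (by simp [ha1 (mem_singleton (φ y))])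
  refine mem_of_superset hnhds fun z hz => ?_
  by_contra hzV
  exact hz (ha0 hzV)

theorem isCompact_preimage_of_apply_eq_dite {Δ : Set X} {φ : Δ → X}
    {α : C₀(X, ℂ) → C₀(X, ℂ)} (hα : ∀ a x, α a x = if h : x ∈ Δ then a (φ ⟨x, h⟩) else 0)
    {K : Set X} (hK : IsCompact K) : IsCompact (φ ⁻¹' K) := by
  obtain ⟨a, ha, -⟩ := exists_eqOn_one_eqOn_zero hK isOpen_univ (subset_univ K)
  set S := {x | α a x = 1} ∩ ⋂ c ∈ {c : C₀(X, ℂ) | EqOn c 0 K}, {x | α c x = 0}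
  have hS : Subtype.val '' (φ ⁻¹' K) = S := by
    ext x
    constructor
    · rintro ⟨z, hz, rfl⟩
      simp only [S, mem_inter_iff, mem_ofPred_eq, mem_iInter₂, hα, dif_pos z.2]
      exact ⟨ha hz, fun c hc => hc hz⟩
    · rintro ⟨hx1, hx0⟩
      have hxΔ : x ∈ Δ := by
        by_contra h
        simp [hα, h] at hx1
      refine ⟨⟨x, hxΔ⟩, ?_, rfl⟩
      by_contra hφK
      obtain ⟨c, hc1, hc0⟩ := exists_eqOn_one_eqOn_zero isCompact_singleton
        hK.isClosed.isOpen_compl (singleton_subset_iff.mpr hφK)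
      have := mem_iInter₂.mp hx0 c fun k hk => hc0 (by simpa using hk)
      simp [hα, hxΔ, hc1 (mem_singleton _)] at this
  rw [Subtype.isCompact_iff, hS]
  refine (isCompact_le_norm (α a) one_pos).of_isClosed_subset ?_ fun x hx => by simp [hx.1.out]
  exact (isClosed_eq (map_continuous _) continuous_const).inter
    (isClosed_biInter fun c _ => isClosed_eq (map_continuous _) continuous_const)

end ZeroAtInftyContinuousMap

/-- Every *-homomorphism `α` of `C₀(X)` (`X` locally compact Hausdorff)
is of the form `α(a)(x) = a(φ(x))` for `x ∈ Δ` and `α(a)(x) = 0` for `x ∉ Δ`, for some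
continuous proper map `φ : Δ → X` defined on an open subset `Δ ⊆ X`. -/
theorem stmt16 {X : Type*} [TopologicalSpace X] [LocallyCompactSpace X] [T2Space X]
    (α : C₀(X, ℂ) →⋆ₙₐ[ℂ] C₀(X, ℂ)) :
    ∃ Δ : Set X, IsOpen Δ ∧ ∃ φ : Δ → X, Continuous φ ∧
      (∀ K : Set X, IsCompact K → IsCompact (φ ⁻¹' K)) ∧
      ∀ (a : C₀(X, ℂ)) (x : X),
        α a x = if h : x ∈ Δ then a (φ ⟨x, h⟩) else 0 := by
  set Δ := {x : X | ∃ a, α a x ≠ 0}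
  have hΔ : IsOpen Δ := by
    simpa only [Δ, ofPred_exists] using
      isOpen_iUnion fun a => isOpen_ne_fun (map_continuous (α a)) continuous_const
  have hchar : ∀ x : Δ, ∃ y, ∀ a, α a x = a y := fun x => by
    obtain ⟨a, ha⟩ := x.2
    simpa using ZeroAtInftyContinuousMap.exists_map_eq_apply
      (χ := (ZeroAtInftyContinuousMap.evalNonUnitalStarAlgHom x.1).comp α)
      (DFunLike.ne_iff.mpr ⟨a, by simpa using ha⟩)
  choose φ hφ using hchar
  have hrepr : ∀ a x, α a x = if h : x ∈ Δ then a (φ ⟨x, h⟩) else 0 := fun a x => by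
    split_ifs with hx
    · exact hφ ⟨x, hx⟩ a
    · exact not_not.mp (not_exists.mp hx a)
  refine ⟨Δ, hΔ, φ, ZeroAtInftyContinuousMap.continuous_of_forall_continuous_comp fun a => ?_,
    fun K hK => ZeroAtInftyContinuousMap.isCompact_preimage_of_apply_eq_dite hrepr hK, hrepr⟩
  simpa [Function.comp_def, ← hφ] using (map_continuous (α a)).comp continuous_subtype_val
end

section
/- Let C be a compact Hausdorff space and φ : C → C a minimal homeomorphism, i.e. a homeomorphism such that the only closed subsets V ⊆ C with φ(V) = V are ∅ and C. Let m : C → ℤ and f : C → ℤ be continuous functions (ℤ carrying the discrete topology) such that f(x) = m(x) · f(φ(x)) for every x ∈ C. If there exists a point x₀ ∈ C with m(x₀) ∉ {−1, 1}, then f is identically zero. -/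
/-!
If `f ≢ 0`, the set `W` where `|f|` takes its least nonzero value is closed, and the cocycle
relation makes `|f|` non-increasing and nonvanishing along forward orbits starting where `f ≠ 0`,
so `φ` maps `W` into itself. A nonempty closed forward-invariant set of a minimal homeomorphism of
a compact space is everything (the intersection of its forward images is closed, nonempty and
invariant), so `|f|` is a nonzero constant and `|m| = 1` everywhere.
-/

open Set

namespace Homeomorph

variable {C : Type*} [TopologicalSpace C]

def IsMinimal (φ : C ≃ₜ C) : Prop :=
  ∀ V : Set C, IsClosed V → φ '' V = V → V = ∅ ∨ V = univ

theorem IsMinimal.eq_univ_of_mapsTo [CompactSpace C] {φ : C ≃ₜ C} (hφ : φ.IsMinimal)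
    {W : Set C} (hW : IsClosed W) (hne : W.Nonempty) (hmaps : MapsTo φ W W) : W = univ := by
  set V : ℕ → Set C := fun n ↦ ⇑(φ ^ n) '' W
  have hV_closed (n : ℕ) : IsClosed (V n) := (φ ^ n).isClosedMap W hW
  have image_mul (g h : C ≃ₜ C) (s : Set C) : ⇑(g * h) '' s = g '' (h '' s) :=
    (image_image g h s).symm ▸ rfl
  have hV_succ (n : ℕ) : V (n + 1) ⊆ V n := by
    simp only [V, pow_succ, image_mul]
    exact image_mono hmaps.image_subset
  have hV_anti : Antitone V := antitone_nat_of_succ_le hV_succ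
  have hne_iInter : (⋂ n, V n).Nonempty :=
    IsCompact.nonempty_iInter_of_sequence_nonempty_isCompact_isClosed V hV_succ
      (fun n ↦ hne.image _) (hV_closed 0).isCompact hV_closed
  have hinv : φ '' ⋂ n, V n = ⋂ n, V n := by
    rw [image_iInter φ.bijective, ← hV_anti.iInter_nat_add 1]
    simp only [V, pow_succ', image_mul]
  rcases hφ _ (isClosed_iInter hV_closed) hinv with h | h
  · exact absurd h hne_iInter.ne_empty
  · have hV_zero : V 0 = W := image_id W
    exact eq_univ_of_univ_subset (hV_zero ▸ h ▸ iInter_subset V 0)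

end Homeomorph

theorem mapsTo_natAbs_eq_of_minimalFor {X : Type*} {g : X → X} {m f : X → ℤ}
    (hrel : ∀ x, f x = m x * f (g x)) {y : X}
    (hy : MinimalFor (fun z ↦ f z ≠ 0) (fun z ↦ (f z).natAbs) y) :
    MapsTo g {z | (f z).natAbs = (f y).natAbs} {z | (f z).natAbs = (f y).natAbs} := by
  intro z (hz : (f z).natAbs = (f y).natAbs)
  have hfz : f z ≠ 0 := by rw [← Int.natAbs_ne_zero, hz, Int.natAbs_ne_zero]; exact hy.1
  have hdvd : f (g z) ∣ f z := Dvd.intro_left _ (hrel z).symm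
  have hle : (f (g z)).natAbs ≤ (f y).natAbs := hz ▸ Int.natAbs_le_of_dvd_ne_zero hdvd hfz
  exact le_antisymm hle (hy.2 (ne_zero_of_dvd_ne_zero hfz hdvd) hle)

theorem stmt19_general {C : Type*} [TopologicalSpace C] [CompactSpace C]
    (φ : C ≃ₜ C)
    (hmin : ∀ V : Set C, IsClosed V → φ '' V = V → V = ∅ ∨ V = Set.univ)
    (m f : C → ℤ) (hf : Continuous f)
    (hrel : ∀ x : C, f x = m x * f (φ x))
    (x₀ : C) (hx₀ : m x₀ ≠ -1 ∧ m x₀ ≠ 1) :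
    ∀ x : C, f x = 0 := by
  intro x
  by_contra hx
  obtain ⟨y, hy_min⟩ :=
    exists_minimalFor_of_wellFoundedLT (fun z ↦ f z ≠ 0) (fun z ↦ (f z).natAbs) ⟨x, hx⟩
  set W := {z | (f z).natAbs = (f y).natAbs}
  have hW_closed : IsClosed W :=
    (isClosed_discrete {(f y).natAbs}).preimage
      (continuous_of_discreteTopology (f := Int.natAbs) |>.comp hf)
  have hW_univ : W = univ := Homeomorph.IsMinimal.eq_univ_of_mapsTo hmin hW_closed ⟨y, rfl⟩
    (mapsTo_natAbs_eq_of_minimalFor hrel hy_min)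
  have hf_const (z : C) : (f z).natAbs = (f y).natAbs := show z ∈ W from hW_univ ▸ mem_univ z
  have hm_abs : (m x₀).natAbs = 1 := by
    have h := congrArg Int.natAbs (hrel x₀)
    rw [Int.natAbs_mul, hf_const x₀, hf_const (φ x₀)] at h
    exact (Nat.mul_eq_right (Int.natAbs_ne_zero.2 hy_min.1)).1 h.symm
  rcases Int.natAbs_eq_iff.1 hm_abs with h | h
  exacts [hx₀.2 h, hx₀.1 h]

/-- Let `φ` be a minimal homeomorphism of a compact Hausdorff space `C`,
and let `m, f : C → ℤ` be continuous (equivalently locally constant) functions with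
`f(x) = m(x) · f(φ(x))` for all `x`. If `m(x₀) ∉ {-1, 1}` for some `x₀`, then `f ≡ 0`. -/
theorem stmt19 {C : Type*} [TopologicalSpace C] [CompactSpace C] [T2Space C]
    (φ : C ≃ₜ C)
    (hmin : ∀ V : Set C, IsClosed V → φ '' V = V → V = ∅ ∨ V = Set.univ)
    (m f : C → ℤ) (hm : Continuous m) (hf : Continuous f)
    (hrel : ∀ x : C, f x = m x * f (φ x))
    (x₀ : C) (hx₀ : m x₀ ≠ -1 ∧ m x₀ ≠ 1) :
    ∀ x : C, f x = 0 :=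
  stmt19_general φ hmin m f hf hrel x₀ hx₀
end
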